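/- arXiv:1310.4131 — 9 statements merged into one kernel-verified Lean document; each statement's English description precedes it below -/
import Mathlib

section
/- For every prime p, every digit v in {0,...,p-1}, and every natural number n, the Apéry numbers A1(n) = \sum_{k=0}^n \binom{n}{k}^2 \binom{n+k}{k}^2 satisfy the p-Lucas property: A1(v + n*p) ≡ A1(v) * A1(n) (mod p). -/
def A1 (n : ℕ) : ℤ :=
  ∑ k ∈ Finset.range (n + 1), (n.choose k : ℤ) ^ 2 * ((n + k).choose k : ℤ) ^ 2

/-!
By Lucas's theorem, writing `m = v + n p` and `k = a + b p` with digits `v, a < p`, both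
`C(m, k)` and `C(m + k, k)` factor modulo `p` into a digit part and a part in `n, b`; for
`C(m + k, k)` this holds also when `v + a` carries, since then both sides vanish. Hence every
summand of `A1 (v + n p)` splits as a product, and summing over the digits `a` and `b`
separately gives `A1 v * A1 n`.
-/

open Finset

theorem Finset.sum_range_mul_eq_sum_sum {M : Type*} [AddCommMonoid M] (f : ℕ → M) (N p : ℕ) :
    ∑ k ∈ range (N * p), f k = ∑ b ∈ range N, ∑ a ∈ range p, f (a + b * p) := by
  induction N with
  | zero => simp
  | succ N ih =>
    rw [Nat.succ_mul, sum_range_add, ih, sum_range_succ]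
    simp only [add_comm]

theorem sum_range_add_mul_eq_mul {R : Type*} [CommSemiring R] {p : ℕ} (t : ℕ → ℕ → R)
    (ht : ∀ m k, m < k → t m k = 0)
    (hmul : ∀ v a n b, v < p → a < p → t (v + n * p) (a + b * p) = t v a * t n b)
    {v : ℕ} (n : ℕ) (hv : v < p) :
    ∑ k ∈ range (v + n * p + 1), t (v + n * p) k
      = (∑ a ∈ range (v + 1), t v a) * ∑ b ∈ range (n + 1), t n b := by
  have extend : ∀ m N, m < N → ∑ k ∈ range (m + 1), t m k = ∑ k ∈ range N, t m k :=
    fun m N hN => sum_subset (range_subset_range.2 hN) fun k hk hkm =>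
      ht m k (by simp only [mem_range] at hk hkm; omega)
  calc ∑ k ∈ range (v + n * p + 1), t (v + n * p) k
      = ∑ k ∈ range ((n + 1) * p), t (v + n * p) k :=
        extend _ _ (by rw [Nat.succ_mul]; omega)
    _ = ∑ b ∈ range (n + 1), ∑ a ∈ range p, t v a * t n b := by
        rw [sum_range_mul_eq_sum_sum]
        refine sum_congr rfl fun b _ => sum_congr rfl fun a ha => hmul v a n b hv ?_
        exact mem_range.1 ha
    _ = (∑ a ∈ range (v + 1), t v a) * ∑ b ∈ range (n + 1), t n b := by
        rw [extend v p hv, sum_mul_sum, sum_comm]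

namespace Choose

variable {p : ℕ} [Fact p.Prime]

theorem natCast_choose_eq_mul (m k : ℕ) :
    (m.choose k : ZMod p) = ((m % p).choose (k % p) : ZMod p) * ((m / p).choose (k / p)) := by
  exact_mod_cast (ZMod.natCast_eq_natCast_iff _ _ _).2 choose_modEq_choose_mod_mul_choose_div_nat

theorem natCast_choose_eq_zero_of_mod_lt {m k : ℕ} (h : m % p < k % p) :
    (m.choose k : ZMod p) = 0 := by
  rw [natCast_choose_eq_mul, Nat.choose_eq_zero_of_lt h, Nat.cast_zero, zero_mul]

theorem natCast_choose_add_mul {v a : ℕ} (n b : ℕ) (hv : v < p) (ha : a < p) :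
    ((v + n * p).choose (a + b * p) : ZMod p) = (v.choose a : ZMod p) * n.choose b := by
  have hp : 0 < p := (Fact.out : p.Prime).pos
  rw [natCast_choose_eq_mul, Nat.add_mul_mod_self_right, Nat.add_mul_mod_self_right,
    Nat.mod_eq_of_lt hv, Nat.mod_eq_of_lt ha, Nat.add_mul_div_right _ _ hp,
    Nat.add_mul_div_right _ _ hp, Nat.div_eq_of_lt hv, Nat.div_eq_of_lt ha, zero_add, zero_add]

theorem natCast_choose_add_add_mul {v a : ℕ} (n b : ℕ) (hv : v < p) (ha : a < p) :
    ((v + n * p + (a + b * p)).choose (a + b * p) : ZMod p)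
      = ((v + a).choose a : ZMod p) * (n + b).choose b := by
  have hsum : v + n * p + (a + b * p) = v + a + (n + b) * p := by ring
  rw [hsum]
  by_cases hcarry : v + a < p
  · exact natCast_choose_add_mul _ _ hcarry ha
  · have hmod : (v + a) % p < a := by
      rw [Nat.mod_eq_sub_mod (by omega), Nat.mod_eq_of_lt (by omega)]
      omega
    have hmod' : (v + a + (n + b) * p) % p < (a + b * p) % p := by
      rwa [Nat.add_mul_mod_self_right, Nat.add_mul_mod_self_right, Nat.mod_eq_of_lt ha]
    rw [natCast_choose_eq_zero_of_mod_lt hmod', natCast_choose_eq_zero_of_mod_lt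
      (by rwa [Nat.mod_eq_of_lt ha]), zero_mul]

end Choose

theorem intCast_A1 {R : Type*} [CommRing R] (m : ℕ) :
    (A1 m : R) = ∑ k ∈ range (m + 1), (m.choose k : R) ^ 2 * ((m + k).choose k : R) ^ 2 := by
  simp [A1]

theorem apery1_lucas (p : ℕ) (hp : p.Prime) (v n : ℕ) (hv : v < p) :
    A1 (v + n * p) ≡ A1 v * A1 n [ZMOD p] := by
  have : Fact p.Prime := ⟨hp⟩
  rw [← ZMod.intCast_eq_intCast_iff, Int.cast_mul, intCast_A1, intCast_A1, intCast_A1]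
  refine sum_range_add_mul_eq_mul (fun m k => (m.choose k : ZMod p) ^ 2 * ((m + k).choose k) ^ 2)
    (fun m k hmk => by simp [Nat.choose_eq_zero_of_lt hmk]) (fun v a n b hv ha => ?_) n hv
  simp only [Choose.natCast_choose_add_mul n b hv ha, Choose.natCast_choose_add_add_mul n b hv ha]
  ring
end

section
/- Let n be a natural number with base-5 expansion n = \sum_{k=0}^N n_k 5^k, where each n_k ∈ {0,...,4}. Let α be the number of indices k such that n_k ∈ {1,3}. Then 5^α divides A1(n) = \sum_{k=0}^n \binom{n}{k}^2 \binom{n+k}{k}^2. -/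
/-!
Write `A1 n = ∑ b, M(n, b) ^ 2` with `M(m, b) = C(m, b) C(m + b, b) = (m + b)! / (b! ^ 2 (m - b)!)`
(`aperyTerm`). We prove more generally that `5 ^ α(m)` divides the twisted sums
`∑ b, M(m, b) ^ 2 W b` for every 5-adic weight `W` of gain 1 (`Regular 5 1`: `b ≡ b' [MOD 5 ^ j]`
forces `W b ≡ W b'` modulo `5 ^ (j + 1)`), and that `5 ^ α(m / 5)` divides them for weights of
gain 0.

Splitting off the factors divisible by 5, `n! = 5 ^ (n / 5) (n / 5)! n!'` with `n!'` the product of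
the integers `≤ n` prime to 5 (`coprimeFactorial`), gives for `m = 5 m₁ + r` and `b = 5 c + s` the
factorization `M(m, b) = 5 ^ k P(c) M(m₁ - β, c) u(m, b)`, where `k` counts the borrow `β` in
`m - b` and the carry in `m + b` at the last digit, `P` is a polynomial, and the unit `u` has gain 1
in `c` because `(x + 5 ^ j t)!' ≡ ((5 ^ j)!') ^ t x!'` modulo `5 ^ j`. Classes with `k ≥ 1`
contribute `5 ^ 2k` times a gain-0 sum for `m₁ - β`; the others merge into a single gain-1 sum for
`m₁`. When `r ∈ {1, 3}` these are the classes `s = 0, 1`, and `u(m, 5 c + 1) / u(m, 5 c) ≡ 2`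
modulo 5 has gain 2, so the merged weight is 5 times a gain-1 weight: this is the extra factor 5
contributed by the digit `r`.
-/

open Finset Nat

namespace Beukers

def coprimeFactorial (p n : ℕ) : ℕ := ∏ i ∈ range n, if p ∣ i + 1 then 1 else i + 1

section CoprimeFactorial

variable {p : ℕ}

theorem coprimeFactorial_succ (n : ℕ) :
    coprimeFactorial p (n + 1) = coprimeFactorial p n * if p ∣ n + 1 then 1 else n + 1 :=
  prod_range_succ _ _

theorem coprimeFactorial_succ_of_not_dvd {n : ℕ} (h : ¬p ∣ n + 1) :
    coprimeFactorial p (n + 1) = coprimeFactorial p n * (n + 1) := by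
  rw [coprimeFactorial_succ, if_neg h]

theorem factorial_eq_mul_coprimeFactorial (p n : ℕ) :
    n ! = p ^ (n / p) * (n / p)! * coprimeFactorial p n := by
  induction n with
  | zero => simp [coprimeFactorial]
  | succ n ih =>
    rw [factorial_succ, ih, coprimeFactorial_succ]
    split_ifs with h
    · have e : p * (n / p + 1) = n + 1 := by rw [← Nat.succ_div_of_dvd h, Nat.mul_div_cancel' h]
      rw [Nat.succ_div_of_dvd h, pow_succ, factorial_succ (n / p), ← e]
      ring
    · rw [Nat.succ_div_of_not_dvd h]
      ring

theorem not_dvd_coprimeFactorial (hp : p.Prime) (n : ℕ) :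
    ¬p ∣ coprimeFactorial p n := by
  simp only [coprimeFactorial, hp.prime.dvd_finsetProd_iff, not_exists, not_and]
  intro i _
  split_ifs with h
  · exact hp.not_dvd_one
  · exact h

theorem coprimeFactorial_add_pow {k : ℕ} (hk : k ≠ 0) (x : ℕ) :
    (coprimeFactorial p (x + p ^ k) : ZMod (p ^ k)) =
      coprimeFactorial p (p ^ k) * coprimeFactorial p x := by
  induction x with
  | zero => simp [coprimeFactorial]
  | succ n ih =>
    have hdvd : p ∣ n + p ^ k + 1 ↔ p ∣ n + 1 := by
      rw [add_right_comm, Nat.dvd_add_left (dvd_pow_self p hk)]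
    rw [add_right_comm, coprimeFactorial_succ, coprimeFactorial_succ n]
    simp only [hdvd]
    push_cast
    rw [ih]
    split_ifs
    · ring
    · rw [← Nat.cast_pow, ZMod.natCast_self, add_zero]
      ring

theorem coprimeFactorial_add_pow_mul {k : ℕ} (hk : k ≠ 0) (x t : ℕ) :
    (coprimeFactorial p (x + p ^ k * t) : ZMod (p ^ k)) =
      (coprimeFactorial p (p ^ k) : ZMod (p ^ k)) ^ t * coprimeFactorial p x := by
  induction t with
  | zero => simp
  | succ t ih => rw [mul_add_one, ← add_assoc, coprimeFactorial_add_pow hk, ih]; ring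

end CoprimeFactorial

def aperyTerm (m b : ℕ) : ℕ := m.choose b * (m + b).choose b

theorem aperyTerm_mul_factorial {m b : ℕ} (h : b ≤ m) :
    aperyTerm m b * b ! ^ 2 * (m - b)! = (m + b)! := by
  have h1 := Nat.choose_mul_factorial_mul_factorial h
  have h2 := Nat.choose_mul_factorial_mul_factorial (Nat.le_add_left b m)
  rw [Nat.add_sub_cancel] at h2
  rw [← h2, ← h1, aperyTerm]
  ring

theorem aperyTerm_eq_zero {m b : ℕ} (h : m < b) : aperyTerm m b = 0 := by
  simp [aperyTerm, Nat.choose_eq_zero_of_lt h]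

theorem aperyTerm_mul_coprimeFactorial {p m b c d k : ℕ} (hb : b ≤ m) (hc : b / p = c)
    (hd : (m - b) / p = d) (hk : (m + b) / p = 2 * c + d + k) :
    aperyTerm m b * coprimeFactorial p b ^ 2 * coprimeFactorial p (m - b) =
      p ^ k * (2 * c + d + 1).ascFactorial k * aperyTerm (c + d) c *
        coprimeFactorial p (m + b) := by
  have hX : 0 < p ^ (2 * c + d) * c ! ^ 2 * d ! := by
    rcases p.eq_zero_or_pos with rfl | hp
    · simp [← hc, ← hd]
    · positivity
  apply Nat.eq_of_mul_eq_mul_right hX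
  have hcd := aperyTerm_mul_factorial (Nat.le_add_right c d)
  rw [Nat.add_sub_cancel_left, show c + d + c = 2 * c + d by ring] at hcd
  calc aperyTerm m b * coprimeFactorial p b ^ 2 * coprimeFactorial p (m - b) *
        (p ^ (2 * c + d) * c ! ^ 2 * d !)
      = aperyTerm m b * (p ^ c * c ! * coprimeFactorial p b) ^ 2 *
          (p ^ d * d ! * coprimeFactorial p (m - b)) := by ring
    _ = (m + b)! := by
      rw [← hc, ← hd, ← factorial_eq_mul_coprimeFactorial, ← factorial_eq_mul_coprimeFactorial,
        aperyTerm_mul_factorial hb]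
    _ = p ^ (2 * c + d + k) * ((2 * c + d)! * (2 * c + d + 1).ascFactorial k) *
          coprimeFactorial p (m + b) := by
      rw [factorial_mul_ascFactorial, ← hk, ← factorial_eq_mul_coprimeFactorial]
    _ = p ^ k * (2 * c + d + 1).ascFactorial k * aperyTerm (c + d) c *
          coprimeFactorial p (m + b) * (p ^ (2 * c + d) * c ! ^ 2 * d !) := by
      rw [← hcd]; ring

section PadicUnits

open scoped Ring

variable {p : ℕ} [Fact p.Prime]

theorem isUnit_natCast_of_not_dvd {n : ℕ} (h : ¬p ∣ n) : IsUnit (n : ℤ_[p]) :=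
  PadicInt.isUnit_iff.mpr <| PadicInt.norm_natCast_eq_one_iff.mpr <|
    (Fact.out : p.Prime).coprime_iff_not_dvd.mpr h

theorem isUnit_coprimeFactorial (n : ℕ) : IsUnit (coprimeFactorial p n : ℤ_[p]) :=
  isUnit_natCast_of_not_dvd (not_dvd_coprimeFactorial Fact.out n)

theorem pow_dvd_sub_iff_toZModPow_eq {k : ℕ} {x y : ℤ_[p]} :
    (p : ℤ_[p]) ^ k ∣ x - y ↔ PadicInt.toZModPow k x = PadicInt.toZModPow k y := by
  rw [← Ideal.mem_span_singleton, ← PadicInt.ker_toZModPow, RingHom.mem_ker, map_sub, sub_eq_zero]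

noncomputable def aperyUnit (p : ℕ) [Fact p.Prime] (m b : ℕ) : ℤ_[p] :=
  coprimeFactorial p (m + b) * (coprimeFactorial p b ^ 2 * coprimeFactorial p (m - b) : ℤ_[p])⁻¹ʳ

theorem aperyUnit_mul (m b : ℕ) :
    aperyUnit p m b * (coprimeFactorial p b ^ 2 * coprimeFactorial p (m - b)) =
      coprimeFactorial p (m + b) :=
  Ring.inverse_mul_cancel_right _ _
    (((isUnit_coprimeFactorial b).pow 2).mul (isUnit_coprimeFactorial (m - b)))

theorem aperyTerm_eq_mul_aperyUnit {m b c d k : ℕ} (hb : b ≤ m) (hc : b / p = c)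
    (hd : (m - b) / p = d) (hk : (m + b) / p = 2 * c + d + k) :
    (aperyTerm m b : ℤ_[p]) =
      p ^ k * (2 * c + d + 1).ascFactorial k * aperyTerm (c + d) c * aperyUnit p m b := by
  have hD := ((isUnit_coprimeFactorial (p := p) b).pow 2).mul (isUnit_coprimeFactorial (m - b))
  rw [← hD.mul_left_inj, mul_assoc _ (aperyUnit p m b), aperyUnit_mul, ← mul_assoc]
  exact_mod_cast aperyTerm_mul_coprimeFactorial hb hc hd hk

theorem aperyUnit_add_pow_mul_sub_dvd {m b k t : ℕ} (h : b + p ^ k * t ≤ m) :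
    (p : ℤ_[p]) ^ k ∣ aperyUnit p m (b + p ^ k * t) - aperyUnit p m b := by
  rcases eq_or_ne k 0 with rfl | hk
  · simp
  -- Shifting `b` by `p ^ k * t` multiplies `(m + b)!'` and `b!'` by `E = ((p ^ k)!') ^ t` and
  -- divides `(m - b)!'` by `E`, which cancels in the ratio.
  rw [pow_dvd_sub_iff_toZModPow_eq]
  set ρ := PadicInt.toZModPow (p := p) k
  have hρ : ∀ n, ρ (coprimeFactorial p n) = coprimeFactorial p n := fun n => map_natCast ρ _
  have hunit : ∀ n, IsUnit (coprimeFactorial p n : ZMod (p ^ k)) := fun n => by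
    simpa [hρ] using (isUnit_coprimeFactorial (p := p) n).map ρ
  have hU : ∀ b, ρ (aperyUnit p m b) * (coprimeFactorial p b ^ 2 * coprimeFactorial p (m - b)) =
      coprimeFactorial p (m + b) := fun b => by
    simpa [hρ] using congrArg ρ (aperyUnit_mul (p := p) m b)
  have hplus := coprimeFactorial_add_pow_mul (p := p) hk (m + b) t
  have hb := coprimeFactorial_add_pow_mul (p := p) hk b t
  have hminus := coprimeFactorial_add_pow_mul (p := p) hk (m - (b + p ^ k * t)) t
  rw [add_assoc] at hplus
  rw [show m - (b + p ^ k * t) + p ^ k * t = m - b by omega] at hminus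
  set E := (coprimeFactorial p (p ^ k) : ZMod (p ^ k)) ^ t
  have hE : IsUnit E := (hunit _).pow t
  have hshift := hU (b + p ^ k * t)
  rw [hb, hplus] at hshift
  have hbase := hU b
  rw [hminus] at hbase
  have hcancel := ((hE.pow 2).mul ((hunit b).pow 2)).mul (hunit (m - (b + p ^ k * t)))
  rw [← hcancel.mul_left_inj]
  linear_combination hshift - E * hbase

end PadicUnits

def Regular (p : ℕ) [Fact p.Prime] (g N : ℕ) (W : ℕ → ℤ_[p]) : Prop :=
  ∀ j b b', b ≤ N → b' ≤ N → b ≡ b' [MOD p ^ j] → (p : ℤ_[p]) ^ (j + g) ∣ W b - W b'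

namespace Regular

variable {p : ℕ} [Fact p.Prime] {g N : ℕ} {V W : ℕ → ℤ_[p]}

theorem of_add_pow_mul
    (h : ∀ j b t, b + p ^ j * t ≤ N → (p : ℤ_[p]) ^ (j + g) ∣ W (b + p ^ j * t) - W b) :
    Regular p g N W := by
  intro j b b' hb hb' hbb'
  rcases le_total b b' with hle | hle
  · obtain ⟨t, ht⟩ := (Nat.modEq_iff_dvd' hle).mp hbb'
    rw [dvd_sub_comm, show b' = b + p ^ j * t by omega]
    exact h j b t (by omega)
  · obtain ⟨t, ht⟩ := (Nat.modEq_iff_dvd' hle).mp hbb'.symm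
    rw [show b = b' + p ^ j * t by omega]
    exact h j b' t (by omega)

theorem mono (hW : Regular p g N W) {g' : ℕ} (hg : g' ≤ g) : Regular p g' N W :=
  fun j b b' hb hb' hbb' => (pow_dvd_pow _ (by omega)).trans (hW j b b' hb hb' hbb')

theorem const (g N : ℕ) (x : ℤ_[p]) : Regular p g N fun _ => x := by
  intro _ _ _ _ _ _
  simp

theorem add (hV : Regular p g N V) (hW : Regular p g N W) : Regular p g N (V + W) :=
  fun j b b' hb hb' hbb' => by
    simpa [add_sub_add_comm] using dvd_add (hV j b b' hb hb' hbb') (hW j b b' hb hb' hbb')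

theorem mul (hV : Regular p g N V) (hW : Regular p g N W) : Regular p g N (V * W) :=
  fun j b b' hb hb' hbb' => by
    have e : (V * W) b - (V * W) b' = V b * (W b - W b') + (V b - V b') * W b' := by
      simp only [Pi.mul_apply]; ring
    rw [e]
    exact dvd_add (dvd_mul_of_dvd_right (hW j b b' hb hb' hbb') _)
      (dvd_mul_of_dvd_left (hV j b b' hb hb' hbb') _)

theorem pow (hW : Regular p g N W) (n : ℕ) : Regular p g N (W ^ n) := by
  induction n with
  | zero => rw [_root_.pow_zero]; exact const g N 1
  | succ n ih => rw [_root_.pow_succ]; exact ih.mul hW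

theorem sum {ι : Type*} (s : Finset ι) {W : ι → ℕ → ℤ_[p]} (hW : ∀ i ∈ s, Regular p g N (W i)) :
    Regular p g N (∑ i ∈ s, W i) := by
  classical
  induction s using Finset.induction_on with
  | empty => rw [sum_empty]; exact const g N 0
  | insert i s hi ih =>
    rw [sum_insert hi]
    exact (hW i (mem_insert_self i s)).add (ih fun j hj => hW j (mem_insert_of_mem hj))

theorem prod {ι : Type*} (s : Finset ι) {W : ι → ℕ → ℤ_[p]} (hW : ∀ i ∈ s, Regular p g N (W i)) :
    Regular p g N (∏ i ∈ s, W i) := by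
  classical
  induction s using Finset.induction_on with
  | empty => rw [prod_empty]; exact const g N 1
  | insert i s hi ih =>
    rw [prod_insert hi]
    exact (hW i (mem_insert_self i s)).mul (ih fun j hj => hW j (mem_insert_of_mem hj))

theorem comp_mul_add (hW : Regular p g N W) {N' s : ℕ} (hN : p * N' + s ≤ N) :
    Regular p (g + 1) N' fun c => W (p * c + s) := by
  intro j c c' hc hc' hcc'
  have h := hW (j + 1) (p * c + s) (p * c' + s) (by nlinarith) (by nlinarith)
    (by rw [pow_succ']; exact (hcc'.mul_left' p).add_right s)
  rwa [add_right_comm] at h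

theorem exists_eq_mul (hW : Regular p (g + 1) N W) (hdvd : ∀ c ≤ N, (p : ℤ_[p]) ∣ W c) :
    ∃ V, Regular p g N V ∧ ∀ c ≤ N, W c = p * V c := by
  have : ∀ c, ∃ v, c ≤ N → W c = p * v := fun c => by
    by_cases hc : c ≤ N
    · obtain ⟨v, hv⟩ := hdvd c hc
      exact ⟨v, fun _ => hv⟩
    · exact ⟨0, fun h => absurd h hc⟩
  choose V hV using this
  refine ⟨V, fun j b b' hb hb' hbb' => ?_, hV⟩
  have h := hW j b b' hb hb' hbb'
  rwa [hV b hb, hV b' hb', ← mul_sub, ← add_assoc, _root_.pow_succ', mul_dvd_mul_iff_left] at h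
  exact_mod_cast (Fact.out : p.Prime).ne_zero

end Regular

theorem natCast_dvd_natCast_sub_of_modEq {R : Type*} [CommRing R] {n a b : ℕ}
    (h : a ≡ b [MOD n]) : (n : R) ∣ (b : R) - a := by
  exact_mod_cast Int.cast_dvd_cast (α := R) _ _ h.dvd

section Regularity

variable {p : ℕ} [Fact p.Prime]

theorem regular_natCast_add (a N : ℕ) : Regular p 0 N fun c => ((a + c : ℕ) : ℤ_[p]) :=
  fun j _ _ _ _ hbb' => by
    simpa using natCast_dvd_natCast_sub_of_modEq (R := ℤ_[p]) (hbb'.add_left a).symm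

theorem regular_ascFactorial (a k N : ℕ) :
    Regular p 0 N fun c => ((a + c).ascFactorial k : ℤ_[p]) := by
  have := Regular.prod (range k) fun i _ => regular_natCast_add (p := p) (a + i) N
  convert this using 1
  ext c
  simp [ascFactorial_eq_prod_range, Finset.prod_apply, add_right_comm]

theorem regular_aperyUnit (m : ℕ) : Regular p 0 m (aperyUnit p m) :=
  Regular.of_add_pow_mul fun _ _ _ h => aperyUnit_add_pow_mul_sub_dvd h

end Regularity

theorem sum_range_mul_eq_sum_sum {M : Type*} [AddCommMonoid M] (f : ℕ → M) (p n : ℕ) :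
    ∑ b ∈ range (p * n), f b = ∑ s ∈ range p, ∑ c ∈ range n, f (p * c + s) := by
  induction n with
  | zero => simp
  | succ n ih =>
    simp only [Nat.mul_succ, sum_range_add, ih, sum_range_succ, sum_add_distrib]

def borrow (r s : ℕ) : ℕ := if s ≤ r then 0 else 1

/-- The borrow in `m - b` plus the carry in `m + b` at the last base-`p` digit, for `m` and `b`
with last digits `r` and `s`. -/
def carries (p r s : ℕ) : ℕ := borrow r s + if r + s < p then 0 else 1

theorem mul_add_le_mul_add_iff {p m₁ r c s : ℕ} (hr : r < p) (hs : s < p) :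
    p * c + s ≤ p * m₁ + r ↔ c + borrow r s ≤ m₁ := by
  unfold borrow
  split_ifs <;> constructor <;> intro <;> nlinarith

theorem div_eq_of_eq_mul_add {n p q t : ℕ} (ht : t < p) (h : n = p * q + t) : n / p = q := by
  rw [h, Nat.mul_add_div (by omega), Nat.div_eq_of_lt ht, add_zero]

section ResidueClasses

variable {p : ℕ} [Fact p.Prime]

theorem aperyTerm_mul_add_eq {m₁ r c s : ℕ} (hr : r < p) (hs : s < p) (hc : c + borrow r s ≤ m₁) :
    (aperyTerm (p * m₁ + r) (p * c + s) : ℤ_[p]) =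
      p ^ carries p r s * (m₁ - borrow r s + 1 + c).ascFactorial (carries p r s) *
        aperyTerm (m₁ - borrow r s) c * aperyUnit p (p * m₁ + r) (p * c + s) := by
  obtain ⟨d, rfl⟩ : ∃ d, m₁ = c + d + borrow r s := ⟨m₁ - c - borrow r s, by omega⟩
  rw [Nat.add_sub_cancel, show c + d + 1 + c = 2 * c + d + 1 by ring]
  apply aperyTerm_eq_mul_aperyUnit
  · exact (mul_add_le_mul_add_iff hr hs).mpr hc
  · exact div_eq_of_eq_mul_add hs rfl
  · refine div_eq_of_eq_mul_add (t := r + p * borrow r s - s) ?_ ?_ <;>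
      unfold borrow at * <;> split_ifs at * <;> simp only [mul_add, mul_zero, mul_one] <;> omega
  · refine div_eq_of_eq_mul_add (t := r + s - p * (if r + s < p then 0 else 1)) ?_ ?_ <;>
      simp only [carries, borrow] at * <;> split_ifs at * <;>
      simp only [two_mul, mul_add, mul_zero, mul_one] <;> omega

noncomputable def weightedAperySum (m : ℕ) (W : ℕ → ℤ_[p]) : ℤ_[p] :=
  ∑ b ∈ range (m + 1), (aperyTerm m b : ℤ_[p]) ^ 2 * W b

theorem weightedAperySum_congr {m : ℕ} {V W : ℕ → ℤ_[p]} (h : ∀ b ≤ m, V b = W b) :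
    weightedAperySum m V = weightedAperySum m W :=
  sum_congr rfl fun b hb => by rw [h b (Nat.lt_succ_iff.mp (mem_range.mp hb))]

theorem weightedAperySum_const_mul (m : ℕ) (x : ℤ_[p]) (W : ℕ → ℤ_[p]) :
    weightedAperySum m (fun b => x * W b) = x * weightedAperySum m W := by
  simp only [weightedAperySum, mul_sum, mul_left_comm x]

noncomputable def classWeight (m₁ r s : ℕ) (W : ℕ → ℤ_[p]) (c : ℕ) : ℤ_[p] :=
  ((m₁ - borrow r s + 1 + c).ascFactorial (carries p r s) : ℤ_[p]) ^ 2 *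
    aperyUnit p (p * m₁ + r) (p * c + s) ^ 2 * W (p * c + s)

theorem weightedAperySum_mul_add_eq_sum_classes {m₁ r : ℕ} (hr : r < p) (W : ℕ → ℤ_[p]) :
    weightedAperySum (p * m₁ + r) W =
      ∑ s ∈ range p, (p : ℤ_[p]) ^ (2 * carries p r s) *
        ∑ c ∈ range (m₁ + 1 - borrow r s),
          (aperyTerm (m₁ - borrow r s) c : ℤ_[p]) ^ 2 * classWeight m₁ r s W c := by
  have hzero : ∀ b, p * m₁ + r < b → (aperyTerm (p * m₁ + r) b : ℤ_[p]) ^ 2 * W b = 0 :=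
    fun b hb => by simp [aperyTerm_eq_zero hb]
  have hrange : p * m₁ + r + 1 ≤ p * (m₁ + 1) := by nlinarith
  rw [weightedAperySum, sum_subset (range_subset_range.mpr hrange)
    fun b _ hb => hzero b (by simpa using hb), sum_range_mul_eq_sum_sum]
  refine sum_congr rfl fun s hs => ?_
  have hs : s < p := mem_range.mp hs
  rw [mul_sum, ← sum_subset (range_subset_range.mpr (Nat.sub_le _ _))]
  · refine sum_congr rfl fun c hc => ?_
    rw [aperyTerm_mul_add_eq hr hs (by have := mem_range.mp hc; omega), classWeight]
    ring
  · intro c _ hc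
    refine hzero _ ?_
    rw [← not_le, mul_add_le_mul_add_iff hr hs]
    simp only [mem_range] at hc
    omega

theorem regular_classWeight {m₁ r s : ℕ} {W : ℕ → ℤ_[p]} (hW : Regular p 0 (p * m₁ + r) W)
    (hr : r < p) (hs : s < p) (hborrow : borrow r s ≤ m₁) :
    Regular p 0 (m₁ - borrow r s) (classWeight m₁ r s W) := by
  have hN : p * (m₁ - borrow r s) + s ≤ p * m₁ + r :=
    (mul_add_le_mul_add_iff hr hs).mpr (by omega)
  exact ((regular_ascFactorial _ _ _).pow 2 |>.mul
    (((regular_aperyUnit _).comp_mul_add hN).mono (Nat.zero_le _) |>.pow 2)).mul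
    ((hW.comp_mul_add hN).mono (Nat.zero_le _))

theorem classWeight_of_carries_eq_zero {m₁ r s : ℕ} (W : ℕ → ℤ_[p]) (h : carries p r s = 0)
    (c : ℕ) :
    classWeight m₁ r s W c = aperyUnit p (p * m₁ + r) (p * c + s) ^ 2 * W (p * c + s) := by
  simp [classWeight, h]

theorem regular_classWeight_of_carries_eq_zero {m₁ r s : ℕ} {W : ℕ → ℤ_[p]}
    (hW : Regular p 0 (p * m₁ + r) W) (h : carries p r s = 0) :
    Regular p 1 m₁ (classWeight m₁ r s W) := by
  have hsr : s ≤ r := by unfold carries borrow at h; split_ifs at h <;> omega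
  have hN : p * m₁ + s ≤ p * m₁ + r := by omega
  have hU := (regular_aperyUnit (p := p) (p * m₁ + r)).comp_mul_add hN
  rw [funext (classWeight_of_carries_eq_zero W h)]
  exact (hU.pow 2).mul (hW.comp_mul_add hN)

def noCarryDigits (p r : ℕ) : Finset ℕ := (range p).filter fun s => carries p r s = 0

theorem weightedAperySum_mul_add_eq_noCarry_add {m₁ r : ℕ} (hr : r < p) (W : ℕ → ℤ_[p]) :
    weightedAperySum (p * m₁ + r) W =
      weightedAperySum m₁ (∑ s ∈ noCarryDigits p r, classWeight m₁ r s W) +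
      ∑ s ∈ (range p).filter (fun s => carries p r s ≠ 0), (p : ℤ_[p]) ^ (2 * carries p r s) *
        ∑ c ∈ range (m₁ + 1 - borrow r s),
          (aperyTerm (m₁ - borrow r s) c : ℤ_[p]) ^ 2 * classWeight m₁ r s W c := by
  rw [weightedAperySum_mul_add_eq_sum_classes hr,
    ← sum_filter_add_sum_filter_not _ fun s => carries p r s = 0]
  congr 1
  simp only [weightedAperySum, noCarryDigits, Finset.sum_apply, mul_sum]
  rw [sum_comm]
  refine sum_congr rfl fun s hs => ?_
  have h : carries p r s = 0 := (mem_filter.mp hs).2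
  have hborrow : borrow r s = 0 := by unfold carries at h; omega
  simp only [h, hborrow, mul_zero, pow_zero, one_mul, Nat.sub_zero]

theorem aperyUnit_succ_mul {m b : ℕ} (hb : b + 1 ≤ m) (h₁ : ¬p ∣ b + 1) (h₂ : ¬p ∣ m + b + 1)
    (h₃ : ¬p ∣ m - b) :
    aperyUnit p m (b + 1) * ((b + 1 : ℕ) : ℤ_[p]) ^ 2 =
      aperyUnit p m b * (((m + b + 1 : ℕ) : ℤ_[p]) * ((m - b : ℕ) : ℤ_[p])) := by
  have e₁ := coprimeFactorial_succ_of_not_dvd h₁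
  have e₂ := coprimeFactorial_succ_of_not_dvd h₂
  have e₃ : coprimeFactorial p (m - b) = coprimeFactorial p (m - (b + 1)) * (m - b) := by
    obtain ⟨n, hn⟩ : ∃ n, m - b = n + 1 := ⟨m - (b + 1), by omega⟩
    rw [hn, coprimeFactorial_succ_of_not_dvd (hn ▸ h₃), show m - (b + 1) = n by omega]
  have u₁ := aperyUnit_mul (p := p) m (b + 1)
  have u₀ := aperyUnit_mul (p := p) m b
  rw [e₁, ← add_assoc, e₂] at u₁
  rw [e₃] at u₀
  push_cast at u₁ u₀ ⊢
  have hD := ((isUnit_coprimeFactorial (p := p) b).pow 2).mul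
    (isUnit_coprimeFactorial (m - (b + 1)))
  rw [← hD.mul_left_inj]
  linear_combination u₁ - ((m : ℤ_[p]) + b + 1) * u₀

end ResidueClasses

section BaseFive

open scoped Ring

instance fact_prime_five : Fact (Nat.Prime 5) := ⟨Nat.prime_five⟩

noncomputable def unitRatio (m c : ℕ) : ℤ_[5] :=
  ((m + 5 * c + 1 : ℕ) : ℤ_[5]) * ((m - 5 * c : ℕ) : ℤ_[5]) * (((5 * c + 1 : ℕ) : ℤ_[5]) ^ 2)⁻¹ʳ

theorem isUnit_five_mul_add_one (c : ℕ) : IsUnit (((5 * c + 1 : ℕ) : ℤ_[5]) ^ 2) :=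
  (isUnit_natCast_of_not_dvd (by omega)).pow 2

theorem aperyUnit_five_mul_add_one {m c : ℕ} (hm : m % 5 = 1 ∨ m % 5 = 3) (hc : 5 * c + 1 ≤ m) :
    aperyUnit 5 m (5 * c + 1) = aperyUnit 5 m (5 * c) * unitRatio m c := by
  have h := aperyUnit_succ_mul (p := 5) hc (by omega) (by omega) (by omega)
  have hinv := Ring.mul_inverse_cancel _ (isUnit_five_mul_add_one c)
  rw [unitRatio]
  linear_combination (-aperyUnit 5 m (5 * c + 1)) * hinv + (((5 * c + 1 : ℕ) : ℤ_[5]) ^ 2)⁻¹ʳ * h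

theorem five_dvd_unitRatio_sub_two {m c : ℕ} (hm : m % 5 = 1 ∨ m % 5 = 3) (hc : 5 * c ≤ m) :
    (5 : ℤ_[5]) ∣ unitRatio m c - 2 := by
  obtain ⟨k, hk⟩ : 5 ∣ m * (m + 1) + 3 := by
    rcases hm with h | h <;> simp [Nat.dvd_iff_mod_eq_zero, Nat.add_mod, Nat.mul_mod, h]
  have hinv := Ring.inverse_mul_cancel _ (isUnit_five_mul_add_one c)
  have hk' : (m : ℤ_[5]) * (m + 1) + 3 = 5 * k := by exact_mod_cast hk
  rw [unitRatio]
  set i := (((5 * c + 1 : ℕ) : ℤ_[5]) ^ 2)⁻¹ʳ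
  refine ⟨(k - 1 - 5 * c - 15 * c ^ 2) * i, ?_⟩
  rw [Nat.cast_sub hc]
  push_cast at hinv ⊢
  linear_combination 2 * hinv + i * hk'

theorem regular_unitRatio {m N : ℕ} (hm : m % 5 = 1 ∨ m % 5 = 3) (hN : 5 * N ≤ m) :
    Regular 5 2 N (unitRatio m) := by
  refine Regular.of_add_pow_mul fun j c t h => ?_
  obtain ⟨k, hk⟩ : 5 ∣ 2 * m ^ 2 + 2 * m + 1 := by
    rcases hm with h | h <;>
      simp [Nat.dvd_iff_mod_eq_zero, Nat.add_mod, Nat.mul_mod, Nat.pow_mod, h]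
  have hk' : 2 * (m : ℤ_[5]) ^ 2 + 2 * m + 1 = 5 * k := by exact_mod_cast hk
  have hi := Ring.inverse_mul_cancel _ (isUnit_five_mul_add_one c)
  have hi' := Ring.inverse_mul_cancel _ (isUnit_five_mul_add_one (c + 5 ^ j * t))
  unfold unitRatio
  rw [Nat.cast_sub (by omega), Nat.cast_sub (by omega)]
  set i := (((5 * c + 1 : ℕ) : ℤ_[5]) ^ 2)⁻¹ʳ
  set i' := (((5 * (c + 5 ^ j * t) + 1 : ℕ) : ℤ_[5]) ^ 2)⁻¹ʳ
  push_cast at hi hi' ⊢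
  set c' : ℤ_[5] := (c : ℤ_[5]) + 5 ^ j * t with hc'
  -- With `R x = (m + 5 x + 1) (m - 5 x)` and `u x = 5 x + 1`, the numerator
  -- `R c' * u c ^ 2 - R c * u c' ^ 2` equals `(5 c - 5 c') G`, where
  -- `G = 2 m ^ 2 + 2 m + 1 + 5 (c + c') (m ^ 2 + m + 1) + 25 c c'` is divisible by 5.
  refine ⟨-(t * (k + (c + c') * (m ^ 2 + m + 1) + 5 * c * c')) * i * i', ?_⟩
  linear_combination (-((m + 5 * c' + 1) * (m - 5 * c')) * i') * hi +
    ((m + 5 * c + 1) * (m - 5 * c) * i) * hi' + (5 * c - 5 * c') * i * i' * hk'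

theorem exists_noCarryWeight_eq_five_mul {m₁ r : ℕ} (hr : r = 1 ∨ r = 3) {W : ℕ → ℤ_[5]}
    (hW : Regular 5 1 (5 * m₁ + r) W) :
    ∃ V, Regular 5 1 m₁ V ∧
      ∀ c ≤ m₁, (∑ s ∈ noCarryDigits 5 r, classWeight m₁ r s W) c = 5 * V c := by
  have hm : (5 * m₁ + r) % 5 = 1 ∨ (5 * m₁ + r) % 5 = 3 := by omega
  have hN₀ : 5 * m₁ + 0 ≤ 5 * m₁ + r := by omega
  have hN₁ : 5 * m₁ + 1 ≤ 5 * m₁ + r := by omega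
  set Q := unitRatio (5 * m₁ + r)
  set B : ℕ → ℤ_[5] := fun c => W (5 * c) + Q c ^ 2 * W (5 * c + 1)
  have hB : Regular 5 2 m₁ B :=
    (hW.comp_mul_add hN₀).add (((regular_unitRatio hm (by omega)).pow 2).mul (hW.comp_mul_add hN₁))
  -- `Q c ≡ 2`, so `1 + Q c ^ 2 ≡ 0` modulo 5.
  have hB5 : ∀ c ≤ m₁, (5 : ℤ_[5]) ∣ B c := by
    intro c hc
    obtain ⟨a, ha⟩ := five_dvd_unitRatio_sub_two hm (show 5 * c ≤ 5 * m₁ + r by omega)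
    have hW5 := hW 0 (5 * c + 1) (5 * c) (by omega) (by omega) Nat.modEq_one
    rw [zero_add, pow_one] at hW5
    have e : B c =
        5 * (W (5 * c) * (1 + a * (Q c + 2))) + Q c ^ 2 * (W (5 * c + 1) - W (5 * c)) := by
      simp only [B]
      linear_combination (W (5 * c) * (Q c + 2)) * ha
    rw [e]
    exact dvd_add (dvd_mul_right _ _) (dvd_mul_of_dvd_right hW5 _)
  obtain ⟨B', hB', hBB'⟩ := hB.exists_eq_mul hB5
  refine ⟨fun c => aperyUnit 5 (5 * m₁ + r) (5 * c) ^ 2 * B' c,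
    (((regular_aperyUnit _).comp_mul_add hN₀).pow 2).mul hB', fun c hc => ?_⟩
  have hdigits : noCarryDigits 5 r = {0, 1} := by rcases hr with rfl | rfl <;> decide
  have h₀ : carries 5 r 0 = 0 := by rcases hr with rfl | rfl <;> decide
  have h₁ : carries 5 r 1 = 0 := by rcases hr with rfl | rfl <;> decide
  rw [hdigits, Finset.sum_apply, sum_pair zero_ne_one, classWeight_of_carries_eq_zero W h₀,
    classWeight_of_carries_eq_zero W h₁, aperyUnit_five_mul_add_one hm (by omega)]
  have := hBB' c hc
  simp only [B] at this
  linear_combination aperyUnit 5 (5 * m₁ + r) (5 * c) ^ 2 * this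

def alpha (n : ℕ) : ℕ := ((Nat.digits 5 n).filter fun d => d = 1 ∨ d = 3).length

theorem alpha_eq (n : ℕ) : alpha n = (if n % 5 = 1 ∨ n % 5 = 3 then 1 else 0) + alpha (n / 5) := by
  rcases eq_or_ne n 0 with rfl | hn
  · simp [alpha]
  rw [alpha, Nat.digits_def' (by norm_num) (Nat.pos_of_ne_zero hn), List.filter_cons]
  split_ifs with h₁ h₂ h₂ <;> simp_all [alpha, add_comm]

theorem alpha_le_alpha_div_add_one (n : ℕ) : alpha n ≤ alpha (n / 5) + 1 := by
  rw [alpha_eq n]; split_ifs <;> omega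

theorem alpha_le_alpha_pred_add_one (n : ℕ) : alpha n ≤ alpha (n - 1) + 1 := by
  induction n using Nat.strong_induction_on with
  | _ n ih =>
  rcases eq_or_ne n 0 with rfl | hn
  · simp
  rw [alpha_eq n, alpha_eq (n - 1)]
  by_cases h : n % 5 = 0
  · have := ih (n / 5) (by omega)
    rw [show (n - 1) / 5 = n / 5 - 1 by omega, show (n - 1) % 5 = 4 by omega, h]
    simp only [if_neg (by decide : ¬(0 = 1 ∨ 0 = 3)), if_neg (by decide : ¬(4 = 1 ∨ 4 = 3))]
    omega
  · rw [show (n - 1) / 5 = n / 5 by omega]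
    split_ifs <;> omega

theorem alpha_le_alpha_pred_div_add_one (n : ℕ) : alpha n ≤ alpha ((n - 1) / 5) + 1 := by
  rw [alpha_eq n]
  by_cases h : n % 5 = 0
  · have := alpha_le_alpha_pred_add_one (n / 5)
    rw [show (n - 1) / 5 = n / 5 - 1 by omega, h]
    simp only [if_neg (by decide : ¬(0 = 1 ∨ 0 = 3))]
    omega
  · rw [show (n - 1) / 5 = n / 5 by omega]
    split_ifs <;> omega

theorem pow_dvd_carryClassSum {m₁ r s : ℕ} (hr : r < 5) (hs : s < 5) (hcarry : carries 5 r s ≠ 0)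
    {W : ℕ → ℤ_[5]} (hW : Regular 5 0 (5 * m₁ + r) W)
    (IH : ∀ V, Regular 5 0 (m₁ - borrow r s) V →
      (5 : ℤ_[5]) ^ alpha ((m₁ - borrow r s) / 5) ∣ weightedAperySum (m₁ - borrow r s) V) :
    (5 : ℤ_[5]) ^ (1 + alpha m₁) ∣ 5 ^ (2 * carries 5 r s) *
      ∑ c ∈ range (m₁ + 1 - borrow r s),
        (aperyTerm (m₁ - borrow r s) c : ℤ_[5]) ^ 2 * classWeight m₁ r s W c := by
  rcases le_or_gt (borrow r s) m₁ with hb | hb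
  · rw [show m₁ + 1 - borrow r s = m₁ - borrow r s + 1 by omega]
    have halpha : alpha m₁ ≤ alpha ((m₁ - borrow r s) / 5) + 1 := by
      unfold borrow
      split_ifs
      · exact alpha_le_alpha_div_add_one m₁
      · exact alpha_le_alpha_pred_div_add_one m₁
    calc (5 : ℤ_[5]) ^ (1 + alpha m₁)
        ∣ 5 ^ (2 * carries 5 r s + alpha ((m₁ - borrow r s) / 5)) := pow_dvd_pow _ (by omega)
      _ = 5 ^ (2 * carries 5 r s) * 5 ^ alpha ((m₁ - borrow r s) / 5) := pow_add _ _ _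
      _ ∣ _ := mul_dvd_mul_left _ (IH _ (regular_classWeight hW hr hs hb))
  · rw [show m₁ + 1 - borrow r s = 0 by unfold borrow at hb ⊢; split_ifs at hb ⊢ <;> omega,
      range_zero, sum_empty, mul_zero]
    exact dvd_zero _

theorem pow_dvd_weightedAperySum_sub_noCarry {m₁ r : ℕ} (hr : r < 5) {W : ℕ → ℤ_[5]}
    (hW : Regular 5 0 (5 * m₁ + r) W)
    (IH : ∀ n ≤ m₁, ∀ V, Regular 5 0 n V → (5 : ℤ_[5]) ^ alpha (n / 5) ∣ weightedAperySum n V) :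
    (5 : ℤ_[5]) ^ (1 + alpha m₁) ∣
      weightedAperySum (5 * m₁ + r) W -
        weightedAperySum m₁ (∑ s ∈ noCarryDigits 5 r, classWeight m₁ r s W) := by
  rw [weightedAperySum_mul_add_eq_noCarry_add hr, add_sub_cancel_left]
  refine dvd_sum fun s hs => ?_
  obtain ⟨hs, hcarry⟩ := mem_filter.mp hs
  exact pow_dvd_carryClassSum hr (mem_range.mp hs) hcarry hW (IH _ (Nat.sub_le _ _))

theorem pow_alpha_dvd_weightedAperySum (m : ℕ) :
    (∀ W, Regular 5 1 m W → (5 : ℤ_[5]) ^ alpha m ∣ weightedAperySum m W) ∧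
    (∀ W, Regular 5 0 m W → (5 : ℤ_[5]) ^ alpha (m / 5) ∣ weightedAperySum m W) := by
  induction m using Nat.strong_induction_on with
  | _ m IH =>
  rcases eq_or_ne m 0 with rfl | hm
  · simp [alpha]
  obtain ⟨m₁, r, hr, rfl⟩ : ∃ m₁ r, r < 5 ∧ m = 5 * m₁ + r :=
    ⟨m / 5, m % 5, Nat.mod_lt _ (by norm_num), (Nat.div_add_mod m 5).symm⟩
  have hm₁ : m₁ < 5 * m₁ + r := by omega
  have hsub := fun W (hW : Regular 5 0 (5 * m₁ + r) W) =>
    pow_dvd_weightedAperySum_sub_noCarry hr hW fun n hn => (IH n (by omega)).2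
  have hnoCarry : ∀ W, Regular 5 0 (5 * m₁ + r) W → (5 : ℤ_[5]) ^ alpha m₁ ∣
      weightedAperySum m₁ (∑ s ∈ noCarryDigits 5 r, classWeight m₁ r s W) := fun W hW =>
    (IH m₁ hm₁).1 _ <| Regular.sum _ fun s hs =>
      regular_classWeight_of_carries_eq_zero hW (mem_filter.mp hs).2
  rw [alpha_eq, show (5 * m₁ + r) / 5 = m₁ by omega, show (5 * m₁ + r) % 5 = r by omega]
  refine ⟨fun W hW => ?_, fun W hW => ?_⟩
  · refine (dvd_sub_left ?_).mp ((pow_dvd_pow 5 ?_).trans (hsub W (hW.mono (Nat.zero_le 1))))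
    · split_ifs with h13
      · obtain ⟨V, hV, hVeq⟩ := exists_noCarryWeight_eq_five_mul h13 hW
        rw [weightedAperySum_congr hVeq, weightedAperySum_const_mul, pow_add, pow_one]
        exact mul_dvd_mul_left 5 ((IH m₁ hm₁).1 V hV)
      · rw [zero_add]
        exact hnoCarry W (hW.mono (Nat.zero_le 1))
    · split_ifs <;> omega
  · exact (dvd_sub_left (hnoCarry W hW)).mp ((pow_dvd_pow 5 (by omega)).trans (hsub W hW))

theorem intCast_A1 (n : ℕ) : ((A1 n : ℤ) : ℤ_[5]) = weightedAperySum n 1 := by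
  simp [A1, weightedAperySum, aperyTerm, mul_pow]

end BaseFive

end Beukers

theorem beukers_conjecture_A (n : ℕ) :
    (5 : ℤ) ^ ((Nat.digits 5 n).filter (fun d => d = 1 ∨ d = 3)).length ∣ A1 n := by
  have h := (Beukers.pow_alpha_dvd_weightedAperySum n).1 1 (Beukers.Regular.const 1 n 1)
  rw [← Beukers.intCast_A1] at h
  exact_mod_cast (PadicInt.pow_p_dvd_int_iff _ _).mp h
end

section
/- For every prime p ≡ 3 (mod 4), the Apéry number A2((p-1)/2) = \sum_{k=0}^{(p-1)/2} \binom{(p-1)/2}{k}^2 \binom{(p-1)/2+k}{k} is divisible by p. -/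
/-! Put `m = (p - 1) / 2`, so that `p = 2m + 1` and `m` is odd because `p ≡ 3 (mod 4)`.
Modulo `p` we have `m + 1 + i ≡ -(m - i)`, hence `binom(m + k, k) ≡ (-1)^k binom(m, k)`
for `k ≤ m`, and `A2(m) ≡ ∑ (-1)^k binom(m, k)^3`. For odd `m` the substitution `k ↦ m - k`
changes the sign of this alternating sum, so it vanishes. -/

def A2 (n : ℕ) : ℤ :=
  ∑ k ∈ Finset.range (n + 1), (n.choose k : ℤ) ^ 2 * ((n + k).choose k : ℤ)

open Finset Nat

theorem Nat.cast_ascFactorial_succ_eq_neg_one_pow_mul_descFactorial {R : Type*} [CommRing R]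
    {m k : ℕ} (hm : (2 * m + 1 : R) = 0) (hk : k ≤ m) :
    ((m + 1).ascFactorial k : R) = (-1) ^ k * (m.descFactorial k : R) := by
  induction k with
  | zero => simp
  | succ k ih =>
    have hfactor : ((m + 1 + k : ℕ) : R) = -((m - k : ℕ) : R) := by
      push_cast [Nat.cast_sub (Nat.le_of_succ_le hk)]
      linear_combination hm
    rw [Nat.ascFactorial_succ, Nat.descFactorial_succ, Nat.cast_mul, Nat.cast_mul, hfactor,
      ih (Nat.le_of_succ_le hk)]
    ring

theorem ZMod.natCast_choose_add_eq_neg_one_pow_mul_choose {p m k : ℕ} [Fact p.Prime]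
    (hp : 2 * m + 1 = p) (hk : k ≤ m) :
    ((m + k).choose k : ZMod p) = (-1) ^ k * (m.choose k : ZMod p) := by
  have hm : ((2 * m + 1 : ℕ) : ZMod p) = 0 := by rw [hp, ZMod.natCast_self]
  push_cast at hm
  have hfact : (k ! : ZMod p) ≠ 0 := by
    rw [Ne, ZMod.natCast_eq_zero_iff, Nat.Prime.dvd_factorial Fact.out]
    omega
  have h := Nat.cast_ascFactorial_succ_eq_neg_one_pow_mul_descFactorial hm hk
  rw [Nat.ascFactorial_eq_factorial_mul_choose, Nat.descFactorial_eq_factorial_mul_choose,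
    Nat.cast_mul, Nat.cast_mul] at h
  exact mul_left_cancel₀ hfact (by linear_combination h)

theorem Int.neg_one_pow_sub_of_odd {m k : ℕ} (hm : Odd m) (hk : k ≤ m) :
    (-1 : ℤ) ^ (m - k) = -(-1) ^ k := by
  rcases Nat.even_or_odd k with h | h
  · rw [h.neg_one_pow, (Nat.Odd.sub_even hk hm h).neg_one_pow]
  · rw [h.neg_one_pow, (Nat.Odd.sub_odd hm h).neg_one_pow, neg_neg]

theorem sum_range_neg_one_pow_mul_choose_pow_of_odd {m : ℕ} (hm : Odd m) (j : ℕ) :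
    ∑ k ∈ range (m + 1), (-1 : ℤ) ^ k * (m.choose k : ℤ) ^ j = 0 := by
  let f : ℕ → ℤ := fun k => (-1) ^ k * (m.choose k : ℤ) ^ j
  suffices ∑ k ∈ range (m + 1), f k = -∑ k ∈ range (m + 1), f k by linarith
  calc ∑ k ∈ range (m + 1), f k
      = ∑ k ∈ range (m + 1), f (m + 1 - 1 - k) := (sum_range_reflect f _).symm
    _ = ∑ k ∈ range (m + 1), -f k := sum_congr rfl fun k hk => by
      have hkm : k ≤ m := Nat.lt_succ_iff.mp (mem_range.mp hk)
      simp only [f, Nat.add_sub_cancel, Nat.choose_symm hkm, Int.neg_one_pow_sub_of_odd hm hkm,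
        neg_mul]
    _ = -∑ k ∈ range (m + 1), f k := sum_neg_distrib f

theorem beukers_stienstra (p : ℕ) (hp : p.Prime) (hp4 : p % 4 = 3) :
    (p : ℤ) ∣ A2 ((p - 1) / 2) := by
  have : Fact p.Prime := ⟨hp⟩
  set m := (p - 1) / 2
  have hmp : 2 * m + 1 = p := by omega
  have hm : Odd m := ⟨(p - 3) / 4, by omega⟩
  rw [← ZMod.intCast_zmod_eq_zero_iff_dvd, A2,
    ← Int.cast_zero, ← sum_range_neg_one_pow_mul_choose_pow_of_odd hm 3]
  push_cast
  refine sum_congr rfl fun k hk => ?_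
  rw [ZMod.natCast_choose_add_eq_neg_one_pow_mul_choose hmp
    (Nat.lt_succ_iff.mp (mem_range.mp hk))]
  ring
end

section
/- For every prime p, the Franel numbers F(n) = \sum_{k=0}^n \binom{n}{k}^3 satisfy the p-Lucas property: for all v ∈ {0,...,p-1} and n ∈ ℕ, F(v + n p) ≡ F(v) F(n) (mod p). -/
def franel (n : ℕ) : ℤ := ∑ k ∈ Finset.range (n + 1), (n.choose k : ℤ) ^ 3

/-!
Lucas' theorem gives `C(np + v, ip + j) ≡ C(v, j) C(n, i) (mod p)` for `v, j < p`. Summing the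
`r`-th powers over `k = ip + j < (n + 1)p`, which only adds vanishing terms, the sum of
`C(np + v, k)^r` factors as `(∑ⱼ C(v, j)^r) (∑ᵢ C(n, i)^r)`; the Franel numbers are the case `r = 3`.
-/

open Finset

theorem Finset.sum_range_mul {M : Type*} [AddCommMonoid M] (f : ℕ → M) (m n : ℕ) :
    ∑ k ∈ range (m * n), f k = ∑ i ∈ range m, ∑ j ∈ range n, f (i * n + j) := by
  induction m with
  | zero => simp
  | succ m ih => rw [Nat.succ_mul, sum_range_add, ih, sum_range_succ]

theorem Nat.sum_range_choose_pow_of_lt {R : Type*} [Semiring R] {r : ℕ} (hr : r ≠ 0)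
    {N M : ℕ} (h : N < M) :
    ∑ k ∈ range M, (N.choose k : R) ^ r = ∑ k ∈ range (N + 1), (N.choose k : R) ^ r := by
  refine (sum_subset (range_subset_range.mpr h) fun k _ hk => ?_).symm
  rw [mem_range, not_lt] at hk
  simp [Nat.choose_eq_zero_of_lt hk, hr]

theorem Choose.choose_mul_add_mul_add {p : ℕ} [Fact p.Prime] {v j : ℕ} (hv : v < p) (hj : j < p)
    (n i : ℕ) : ((n * p + v).choose (i * p + j) : ZMod p) = v.choose j * n.choose i := by
  have hp : 0 < p := (Fact.out : p.Prime).pos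
  have hdiv {m a : ℕ} (ha : a < p) : (m * p + a) / p = m := by
    rw [mul_comm, Nat.mul_add_div hp, Nat.div_eq_of_lt ha, add_zero]
  have h := (ZMod.intCast_eq_intCast_iff _ _ _).mpr
    (Choose.choose_modEq_choose_mod_mul_choose_div (n := n * p + v) (k := i * p + j) (p := p))
  push_cast at h
  rwa [Nat.mul_add_mod_self_right, Nat.mul_add_mod_self_right, Nat.mod_eq_of_lt hv,
    Nat.mod_eq_of_lt hj, hdiv hv, hdiv hj] at h

theorem Choose.sum_range_choose_pow_mul_add {p : ℕ} [Fact p.Prime] {r : ℕ} (hr : r ≠ 0)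
    {v : ℕ} (hv : v < p) (n : ℕ) :
    ∑ k ∈ range (n * p + v + 1), ((n * p + v).choose k : ZMod p) ^ r =
      (∑ j ∈ range (v + 1), (v.choose j : ZMod p) ^ r) *
        ∑ i ∈ range (n + 1), (n.choose i : ZMod p) ^ r := by
  have hlt : n * p + v < (n + 1) * p := by rw [Nat.succ_mul]; omega
  calc ∑ k ∈ range (n * p + v + 1), ((n * p + v).choose k : ZMod p) ^ r
      = ∑ i ∈ range (n + 1), ∑ j ∈ range p, ((n * p + v).choose (i * p + j) : ZMod p) ^ r := by
        rw [← Nat.sum_range_choose_pow_of_lt hr hlt, sum_range_mul]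
    _ = ∑ i ∈ range (n + 1), ∑ j ∈ range p, (v.choose j : ZMod p) ^ r * (n.choose i) ^ r := by
        refine sum_congr rfl fun i _ => sum_congr rfl fun j hj => ?_
        rw [Choose.choose_mul_add_mul_add hv (mem_range.mp hj), mul_pow]
    _ = (∑ j ∈ range (v + 1), (v.choose j : ZMod p) ^ r) *
          ∑ i ∈ range (n + 1), (n.choose i : ZMod p) ^ r := by
        rw [← Nat.sum_range_choose_pow_of_lt hr hv, sum_mul_sum, sum_comm]

theorem franel_lucas (p : ℕ) (hp : p.Prime) (v n : ℕ) (hv : v < p) :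
    franel (v + n * p) ≡ franel v * franel n [ZMOD p] := by
  have : Fact p.Prime := ⟨hp⟩
  rw [← ZMod.intCast_eq_intCast_iff, add_comm]
  unfold franel
  push_cast
  exact Choose.sum_range_choose_pow_mul_add three_ne_zero hv n
end

section
/- For every prime p, the sequence A5(n) = \sum_{k=0}^n \binom{n}{k}^4 satisfies A5(p-1) ≡ 0 (mod p). -/
open Finset

theorem Nat.Prime.cast_choose_pred {R : Type*} [Ring R] {p : ℕ} [CharP R p] (hp : p.Prime)
    {k : ℕ} (hk : k < p) : ((p - 1).choose k : R) = (-1) ^ k := by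
  induction k with
  | zero => simp
  | succ k ih =>
    have hpascal : (p - 1).choose k + (p - 1).choose (k + 1) = p.choose (k + 1) := by
      rw [← Nat.choose_succ_succ', Nat.sub_add_cancel hp.one_le]
    have hdvd : ((p.choose (k + 1) : ℕ) : R) = 0 :=
      (CharP.cast_eq_zero_iff R p _).mpr (hp.dvd_choose_self k.succ_ne_zero hk)
    have hsum := congrArg (Nat.cast : ℕ → R) hpascal
    push_cast at hsum
    rw [hdvd, ih (by omega)] at hsum
    rw [pow_succ, mul_neg_one]
    exact eq_neg_of_add_eq_zero_right hsum

theorem Nat.Prime.dvd_sum_choose_pred_pow_even {p : ℕ} (hp : p.Prime) {r : ℕ} (hr : Even r) :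
    (p : ℤ) ∣ ∑ k ∈ range p, ((p - 1).choose k : ℤ) ^ r := by
  rw [← ZMod.intCast_zmod_eq_zero_iff_dvd]
  push_cast
  have hterm : ∀ k ∈ range p, ((p - 1).choose k : ZMod p) ^ r = 1 := fun k hk => by
    rw [hp.cast_choose_pred (mem_range.mp hk), ← pow_mul, mul_comm, pow_mul, hr.neg_one_pow, one_pow]
  simp [sum_congr rfl hterm]

theorem calkin (p : ℕ) (hp : p.Prime) :
    (p : ℤ) ∣ ∑ k ∈ Finset.range p, ((p - 1).choose k : ℤ) ^ 4 :=
  hp.dvd_sum_choose_pred_pow_even (by decide)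
end

section
/- Let p be a prime, d ≥ 1, and let e = (e_1,...,e_u), f = (f_1,...,f_v) be tuples of vectors in ℕ^d with \sum e_i = \sum f_i. Then for all a ∈ {0,...,p-1}^d and all n ∈ ℕ^d, the ratio Q(a + n p) / (Q(a) Q(n)), where Q(m) = \prod_i (e_i · m)! / \prod_i (f_i · m)!, is congruent modulo p (as p-adic numbers) to \prod_{i=1}^u \prod_{j=1}^{⌊e_i·a/p⌋} (1 + (e_i·n)/j) / \prod_{i=1}^v \prod_{j=1}^{⌊f_i·a/p⌋} (1 + (f_i·n)/j), i.e. their quotient lies in 1 + p ℤ_p. -/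
/-!
For any `M` and `r`, `(M p + r)! = p^M M! w` with `w ≡ (-1)^M r! (mod p)`: each block of `p`
consecutive factors contributes one multiple of `p` and a cofactor `≡ (p-1)! ≡ -1` (Wilson), and
the multiples of `p` assemble into `p^M M!`. For `A = e_i·a`, `N = e_i·n` and `q = ⌊A/p⌋`, the
numbers `A` and `A + N p` have the same remainder mod `p`, so
`(A + N p)! / (A! N!) = (-p)^N (q + N)! / (q! N!) u = (-p)^N ∏_{j ≤ q} (1 + N/j) u`
with `u ≡ 1 (mod p)`. Taking the product over the `e_i` and dividing by that over the `f_i`, the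
powers of `-p` cancel because `∑ e_i·n = ∑ f_i·n`, and the factors `u` stay in the group of
principal units `{x | ‖x - 1‖ < 1}` of `ℚ_p`.
-/

open Finset

/-- The factorial ratio `Q_{e,f}(m) = ∏ (e_i·m)! / ∏ (f_i·m)!` as a rational number. -/
def Qef {d u v : ℕ} (e : Fin u → Fin d → ℕ) (f : Fin v → Fin d → ℕ)
    (m : Fin d → ℕ) : ℚ :=
  (∏ i, ((∑ j, e i j * m j).factorial : ℚ)) / ∏ i, ((∑ j, f i j * m j).factorial : ℚ)

open Nat

section PrincipalUnits

variable {K : Type*} [NormedField K] [IsUltrametricDist K]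

lemma norm_eq_one_of_norm_sub_one_lt_one {x : K} (hx : ‖x - 1‖ < 1) : ‖x‖ = 1 := by
  have h := IsUltrametricDist.norm_add_eq_max_of_norm_ne_norm (x := x - 1) (y := 1)
    (by rw [norm_one]; exact hx.ne)
  rwa [sub_add_cancel, norm_one, max_eq_right hx.le] at h

variable (K) in
def principalUnits : Submonoid K where
  carrier := {x | ‖x - 1‖ < 1}
  one_mem' := by simp
  mul_mem' {x y} hx hy := by
    have hxy : x * y - 1 = x * (y - 1) + (x - 1) := by ring
    change ‖x * y - 1‖ < 1
    rw [hxy]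
    refine (IsUltrametricDist.norm_add_le_max _ _).trans_lt (max_lt ?_ hx)
    rwa [norm_mul, norm_eq_one_of_norm_sub_one_lt_one hx, one_mul]

lemma mem_principalUnits {x : K} : x ∈ principalUnits K ↔ ‖x - 1‖ < 1 := Iff.rfl

lemma inv_mem_principalUnits {x : K} (hx : x ∈ principalUnits K) :
    x⁻¹ ∈ principalUnits K := by
  rw [mem_principalUnits] at hx ⊢
  have hx1 := norm_eq_one_of_norm_sub_one_lt_one hx
  have hx0 : x ≠ 0 := norm_ne_zero_iff.mp (by rw [hx1]; exact one_ne_zero)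
  rwa [show x⁻¹ - 1 = (1 - x) * x⁻¹ by field_simp, norm_mul, norm_inv, hx1, inv_one, mul_one,
    norm_sub_rev]

end PrincipalUnits

section Padic

variable {p : ℕ} [Fact p.Prime]

lemma Padic.exists_eq_one_add_mul_of_mem_principalUnits {x : ℚ_[p]}
    (hx : x ∈ principalUnits ℚ_[p]) :
    ∃ z : ℤ_[p], x = 1 + p * z := by
  let y : ℤ_[p] := ⟨x - 1, hx.le⟩
  obtain ⟨z, hz⟩ := (PadicInt.norm_lt_one_iff_dvd y).mp hx
  refine ⟨z, ?_⟩
  have : x - 1 = p * z := by simpa [y] using congrArg ((↑) : ℤ_[p] → ℚ_[p]) hz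
  linear_combination this

lemma Padic.intCast_div_mem_principalUnits {m m' : ℤ} (hm : (m : ZMod p) = m')
    (hm' : (m' : ZMod p) ≠ 0) :
    (m / m' : ℚ_[p]) ∈ principalUnits ℚ_[p] := by
  have hdvd : (p : ℤ) ∣ m - m' := (ZMod.intCast_eq_intCast_iff_dvd_sub _ _ _).mp hm.symm
  have hm'1 : ‖(m' : ℚ_[p])‖ = 1 :=
    le_antisymm (Padic.norm_int_le_one _) <| not_lt.mp fun h =>
      hm' ((ZMod.intCast_zmod_eq_zero_iff_dvd _ _).mpr (Padic.norm_intCast_lt_one_iff.mp h))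
  have hm'0 : (m' : ℚ_[p]) ≠ 0 := norm_ne_zero_iff.mp (by rw [hm'1]; exact one_ne_zero)
  rw [mem_principalUnits, div_sub_one hm'0, norm_div, hm'1, div_one]
  exact_mod_cast Padic.norm_intCast_lt_one_iff.mpr hdvd

lemma ZMod.natCast_ascFactorial_mul_add_one (p M k : ℕ) :
    ((M * p + 1).ascFactorial k : ZMod p) = k ! := by
  rw [← one_ascFactorial, ascFactorial_eq_prod_range, ascFactorial_eq_prod_range]
  push_cast
  simp

lemma exists_factorial_mul_eq (M : ℕ) :
    ∃ w : ℕ, (M * p)! = p ^ M * M ! * w ∧ (w : ZMod p) = (-1) ^ M := by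
  induction M with
  | zero => exact ⟨1, by simp, by simp⟩
  | succ M ih =>
    obtain ⟨w, hw, hw'⟩ := ih
    have hp := (Fact.out : p.Prime).one_le
    have hMp : (M + 1) * p = M * p + (p - 1) + 1 := by
      rw [add_assoc, Nat.sub_add_cancel hp]; ring
    refine ⟨w * (M * p + 1).ascFactorial (p - 1), ?_, ?_⟩
    · rw [hMp, factorial_succ, ← factorial_mul_ascFactorial, hw, ← hMp, factorial_succ]
      ring
    · push_cast [hw', ZMod.natCast_ascFactorial_mul_add_one, ZMod.wilsons_lemma]
      ring

lemma exists_factorial_mul_add_eq (M r : ℕ) :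
    ∃ w : ℕ, (M * p + r)! = p ^ M * M ! * w ∧ (w : ZMod p) = (-1) ^ M * r ! := by
  obtain ⟨w, hw, hw'⟩ := exists_factorial_mul_eq (p := p) M
  refine ⟨w * (M * p + 1).ascFactorial r, ?_, ?_⟩
  · rw [← factorial_mul_ascFactorial, hw]
    ring
  · push_cast [hw', ZMod.natCast_ascFactorial_mul_add_one]
    ring

lemma Nat.cast_factorial_add_eq_prod {K : Type*} [Field K] [CharZero K] (q N : ℕ) :
    ((q + N)! : K) = q ! * N ! * ∏ j ∈ Icc 1 q, (1 + (N : K) / j) := by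
  induction q with
  | zero => simp
  | succ q ih =>
    rw [prod_Icc_succ_top (Nat.le_add_left 1 q), show q + 1 + N = q + N + 1 by ring,
      factorial_succ, factorial_succ]
    push_cast [ih]
    field_simp
    ring

lemma exists_factorial_add_mul_div_eq {q r : ℕ} (hr : r < p) (N : ℕ) :
    ∃ x ∈ principalUnits ℚ_[p],
      (((q * p + r + N * p)! / ((q * p + r)! * N !) : ℚ) : ℚ_[p]) =
        (-p) ^ N * ((∏ j ∈ Icc 1 q, (1 + (N : ℚ) / j) : ℚ) : ℚ_[p]) * x := by
  obtain ⟨w, hw, hw'⟩ := exists_factorial_mul_add_eq (p := p) q r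
  obtain ⟨W, hW, hW'⟩ := exists_factorial_mul_add_eq (p := p) (q + N) r
  have hr' : (r ! : ZMod p) ≠ 0 := by
    rw [Ne, ZMod.natCast_eq_zero_iff, (Fact.out : p.Prime).dvd_factorial]
    omega
  refine ⟨(W : ℤ) / ((-1) ^ N * w : ℤ), Padic.intCast_div_mem_principalUnits ?_ ?_, ?_⟩
  · push_cast [hW', hw']
    ring
  · push_cast [hw']
    exact mul_ne_zero (pow_ne_zero _ (neg_ne_zero.mpr one_ne_zero))
      (mul_ne_zero (pow_ne_zero _ (neg_ne_zero.mpr one_ne_zero)) hr')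
  · rw [show q * p + r + N * p = (q + N) * p + r by ring, hW, hw]
    have hp0 : (p : ℚ_[p]) ≠ 0 := Nat.cast_ne_zero.mpr (Fact.out : p.Prime).ne_zero
    have hq : (q ! : ℚ_[p]) ≠ 0 := Nat.cast_ne_zero.mpr (factorial_ne_zero q)
    have hN : (N ! : ℚ_[p]) ≠ 0 := Nat.cast_ne_zero.mpr (factorial_ne_zero N)
    push_cast [Nat.cast_factorial_add_eq_prod (K := ℚ_[p]) q N]
    field_simp
    ring

lemma exists_prod_factorial_add_mul_div_eq {ι : Type*} [Fintype ι] (A N : ι → ℕ) :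
    ∃ x ∈ principalUnits ℚ_[p],
      ((∏ i, ((A i + N i * p)! / ((A i)! * (N i)!) : ℚ) : ℚ) : ℚ_[p]) =
        (-p) ^ (∑ i, N i) *
          ((∏ i, ∏ j ∈ Icc 1 (A i / p), (1 + (N i : ℚ) / j) : ℚ) : ℚ_[p]) * x := by
  have hp := (Fact.out : p.Prime).pos
  choose x hx hAN using fun i => exists_factorial_add_mul_div_eq (p := p)
    (q := A i / p) (Nat.mod_lt (A i) hp) (N i)
  simp only [Nat.div_add_mod'] at hAN
  refine ⟨∏ i, x i, prod_mem fun i _ => hx i, ?_⟩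
  push_cast at hAN ⊢
  rw [prod_congr rfl fun i _ => hAN i, prod_mul_distrib, prod_mul_distrib, prod_pow_eq_pow_sum]

end Padic

lemma sum_mul_add_mul_eq {ι : Type*} (s : Finset ι) (c a n : ι → ℕ) (p : ℕ) :
    ∑ j ∈ s, c j * (a j + n j * p) = ∑ j ∈ s, c j * a j + (∑ j ∈ s, c j * n j) * p := by
  rw [sum_mul, ← sum_add_distrib]
  exact sum_congr rfl fun j _ => by ring

lemma Qef_add_mul_div_eq {d u v : ℕ} (e : Fin u → Fin d → ℕ) (f : Fin v → Fin d → ℕ)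
    (a n : Fin d → ℕ) (p : ℕ) :
    Qef e f (fun j => a j + n j * p) / (Qef e f a * Qef e f n) =
      (∏ i, ((∑ j, e i j * a j + (∑ j, e i j * n j) * p)! /
        ((∑ j, e i j * a j)! * (∑ j, e i j * n j)!) : ℚ)) /
      ∏ i, ((∑ j, f i j * a j + (∑ j, f i j * n j) * p)! /
        ((∑ j, f i j * a j)! * (∑ j, f i j * n j)!) : ℚ) := by
  simp only [Qef, sum_mul_add_mul_eq, prod_div_distrib, prod_mul_distrib]
  field_simp

theorem factorial_ratio_congruence_general (p : ℕ) [Fact p.Prime] (d u v : ℕ)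
    (e : Fin u → Fin d → ℕ) (f : Fin v → Fin d → ℕ)
    (hef : ∀ j, ∑ i, e i j = ∑ i, f i j)
    (a n : Fin d → ℕ) :
    ∃ z : ℤ_[p],
      ((Qef e f (fun j => a j + n j * p) / (Qef e f a * Qef e f n) : ℚ) : ℚ_[p]) =
        (((∏ i, ∏ j ∈ Finset.Icc 1 ((∑ j, e i j * a j) / p),
              (1 + (∑ k, e i k * n k : ℚ) / j)) /
            ∏ i, ∏ j ∈ Finset.Icc 1 ((∑ j, f i j * a j) / p),
              (1 + (∑ k, f i k * n k : ℚ) / j) : ℚ) : ℚ_[p]) * (1 + p * z) := by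
  obtain ⟨x, hx, hxe⟩ := exists_prod_factorial_add_mul_div_eq (p := p)
    (fun i => ∑ j, e i j * a j) (fun i => ∑ j, e i j * n j)
  obtain ⟨y, hy, hyf⟩ := exists_prod_factorial_add_mul_div_eq (p := p)
    (fun i => ∑ j, f i j * a j) (fun i => ∑ j, f i j * n j)
  obtain ⟨z, hz⟩ :=
    Padic.exists_eq_one_add_mul_of_mem_principalUnits (mul_mem hx (inv_mem_principalUnits hy))
  have hN : ∑ i, ∑ j, e i j * n j = ∑ i, ∑ j, f i j * n j := by
    rw [sum_comm, sum_comm (γ := Fin v)]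
    simp only [← sum_mul, hef]
  refine ⟨z, ?_⟩
  have hp : (-p : ℚ_[p]) ^ (∑ i, ∑ j, f i j * n j) ≠ 0 :=
    pow_ne_zero _ (neg_ne_zero.mpr (Nat.cast_ne_zero.mpr (Fact.out : p.Prime).ne_zero))
  rw [Qef_add_mul_div_eq, Rat.cast_div, hxe, hyf, hN, ← hz, mul_assoc, mul_assoc,
    mul_div_mul_left _ _ hp, mul_div_mul_comm, div_eq_mul_inv x]
  push_cast
  rfl

theorem factorial_ratio_congruence (p : ℕ) [Fact p.Prime] (d u v : ℕ)
    (e : Fin u → Fin d → ℕ) (f : Fin v → Fin d → ℕ)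
    (hef : ∀ j, ∑ i, e i j = ∑ i, f i j)
    (a n : Fin d → ℕ) (ha : ∀ j, a j < p) :
    ∃ z : ℤ_[p],
      ((Qef e f (fun j => a j + n j * p) / (Qef e f a * Qef e f n) : ℚ) : ℚ_[p]) =
        (((∏ i, ∏ j ∈ Finset.Icc 1 ((∑ j, e i j * a j) / p),
              (1 + (∑ k, e i k * n k : ℚ) / j)) /
            ∏ i, ∏ j ∈ Finset.Icc 1 ((∑ j, f i j * a j) / p),
              (1 + (∑ k, f i k * n k : ℚ) / j) : ℚ) : ℚ_[p]) * (1 + p * z) :=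
  factorial_ratio_congruence_general p d u v e f hef a n
end

section
/- Let e, f be tuples of vectors in ℕ^d with |e| = |f| and with Δ_{e,f}(x) ≥ 1 for all x ∈ D_{e,f}. Then for every prime p and every n ∈ ℕ^d, the p-adic valuation of Q_{e,f}(n) is at least α_p(Q_{e,f}, n), the number of base-p digit vectors n_k of n (writing n = \sum_k n_k p^k with n_k ∈ {0,...,p-1}^d) such that n_k / p ∈ D_{e,f}. -/
/-!
By Legendre's formula, for every prime `q` the `q`-adic valuation of `∏ (e_i·n)! / ∏ (f_i·n)!` is
`∑_{ℓ ≥ 1} (∑ ⌊e_i·n / q^ℓ⌋ - ∑ ⌊f_i·n / q^ℓ⌋)`. Since `∑ e_i = ∑ f_i`, the integer parts of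
`n / q^ℓ` cancel and the `ℓ`-th term is `Δ_{e,f}(r / q^ℓ)` with `r = n mod q^ℓ`: it vanishes when
`r / q^ℓ ∉ D_{e,f}` and is at least `1` when `r / q^ℓ ∈ D_{e,f}`. For `q = p` and `ℓ = k + 1` we have
`r ≥ p^k n_k` componentwise, so `n_k / p ∈ D_{e,f}` forces `r / p^(k+1) ∈ D_{e,f}`; thus every such
digit contributes a level with a positive term.
-/

open Finset

/-- Landau's function `Δ_{e,f}(x) = ∑ ⌊e_i·x⌋ − ∑ ⌊f_i·x⌋`. -/
noncomputable def Landau {d u v : ℕ} (e : Fin u → Fin d → ℕ) (f : Fin v → Fin d → ℕ)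
    (x : Fin d → ℝ) : ℤ :=
  (∑ i, ⌊∑ j, (e i j : ℝ) * x j⌋) - ∑ i, ⌊∑ j, (f i j : ℝ) * x j⌋

lemma sum_digits_mul_pow_lt {p : ℕ} {a : ℕ → ℕ} (ha : ∀ k, a k < p) (t : ℕ) :
    ∑ k ∈ range t, a k * p ^ k < p ^ t := by
  induction t with
  | zero => simp
  | succ t ih =>
    calc ∑ k ∈ range (t + 1), a k * p ^ k
        < p ^ t + a t * p ^ t := by rw [sum_range_succ]; omega
      _ = (a t + 1) * p ^ t := by ring
      _ ≤ p ^ (t + 1) := by rw [pow_succ']; exact Nat.mul_le_mul_right _ (ha t)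

lemma sum_digits_mul_pow_mod_pow {p : ℕ} {a : ℕ → ℕ} (ha : ∀ k, a k < p) {t M : ℕ}
    (ht : t ≤ M) :
    (∑ k ∈ range M, a k * p ^ k) % p ^ t = ∑ k ∈ range t, a k * p ^ k := by
  obtain ⟨w, hw⟩ : p ^ t ∣ ∑ k ∈ Ico t M, a k * p ^ k :=
    dvd_sum fun k hk => (pow_dvd_pow p (mem_Ico.mp hk).1).mul_left _
  rw [← sum_range_add_sum_Ico _ ht, hw, Nat.add_mul_mod_self_left,
    Nat.mod_eq_of_lt (sum_digits_mul_pow_lt ha t)]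

lemma digit_mul_pow_le_mod_pow {p : ℕ} {a : ℕ → ℕ} (ha : ∀ k, a k < p) {k M : ℕ}
    (hk : k < M) :
    a k * p ^ k ≤ (∑ k ∈ range M, a k * p ^ k) % p ^ (k + 1) := by
  rw [sum_digits_mul_pow_mod_pow ha hk]
  exact single_le_sum (f := fun k => a k * p ^ k) (fun _ _ => Nat.zero_le _)
    (self_mem_range_succ k)

lemma factorization_prod_factorial {ι : Type*} [Fintype ι] {q : ℕ} (hq : q.Prime)
    {a : ι → ℕ} {b : ℕ} (hb : ∀ i, a i < b) :
    (∏ i, (a i).factorial).factorization q = ∑ ℓ ∈ Ico 1 b, ∑ i, a i / q ^ ℓ := by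
  rw [Nat.factorization_prod fun i _ => (a i).factorial_ne_zero, sum_apply', sum_comm]
  exact sum_congr rfl fun i _ =>
    Nat.factorization_factorial hq ((Nat.log_le_self q (a i)).trans_lt (hb i))

lemma dotProduct_div_eq {d : ℕ} (c n : Fin d → ℕ) {Q : ℕ} (hQ : 0 < Q) :
    c ⬝ᵥ n / Q = c ⬝ᵥ (fun j => n j / Q) + c ⬝ᵥ (fun j => n j % Q) / Q := by
  have : c ⬝ᵥ n = Q * c ⬝ᵥ (fun j => n j / Q) + c ⬝ᵥ (fun j => n j % Q) := by
    simp only [dotProduct, mul_sum, ← sum_add_distrib]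
    refine sum_congr rfl fun j _ => ?_
    conv_lhs => rw [← Nat.div_add_mod (n j) Q]
    ring
  rw [this, Nat.mul_add_div hQ]

lemma sum_mul_div_eq_dotProduct_div {d : ℕ} (c r : Fin d → ℕ) (Q : ℕ) :
    ∑ j, (c j : ℝ) * (r j / Q) = ((c ⬝ᵥ r : ℕ) : ℝ) / Q := by
  simp only [dotProduct, Nat.cast_sum, Nat.cast_mul, sum_div, mul_div_assoc]

section FactorialRatio

variable {d u v : ℕ} (e : Fin u → Fin d → ℕ) (f : Fin v → Fin d → ℕ)

def LandauCondition : Prop :=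
  ∀ x : Fin d → ℝ, (∀ j, 0 ≤ x j ∧ x j < 1) →
    ((∃ i, 1 ≤ ∑ j, (e i j : ℝ) * x j) ∨ (∃ i, 1 ≤ ∑ j, (f i j : ℝ) * x j)) →
    1 ≤ Landau e f x

/-- `InDomain e f c m` says that `m / c ∈ D_{e,f}`. -/
def InDomain (c : ℕ) (m : Fin d → ℕ) : Prop :=
  (∃ i, c ≤ e i ⬝ᵥ m) ∨ ∃ i, c ≤ f i ⬝ᵥ m

instance (c : ℕ) : DecidablePred (InDomain e f c) :=
  fun _ => inferInstanceAs (Decidable (_ ∨ _))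

variable {e f}

lemma InDomain.mono {c t : ℕ} {m m' : Fin d → ℕ} (h : InDomain e f c m)
    (hm : ∀ j, t * m j ≤ m' j) : InDomain e f (t * c) m' := by
  have scale {w : Fin d → ℕ} (hw : c ≤ w ⬝ᵥ m) : t * c ≤ w ⬝ᵥ m' :=
    calc t * c ≤ t * (w ⬝ᵥ m) := Nat.mul_le_mul_left t hw
      _ = ∑ j, w j * (t * m j) := by simp only [dotProduct, mul_sum]; ring_nf
      _ ≤ w ⬝ᵥ m' := sum_le_sum fun j _ => Nat.mul_le_mul_left _ (hm j)
  exact h.imp (fun ⟨i, hi⟩ => ⟨i, scale hi⟩) fun ⟨i, hi⟩ => ⟨i, scale hi⟩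

lemma sum_dotProduct_eq_of_sum_eq (hef : ∀ j, ∑ i, e i j = ∑ i, f i j) (m : Fin d → ℕ) :
    ∑ i, e i ⬝ᵥ m = ∑ i, f i ⬝ᵥ m := by
  have : ∑ i, e i = ∑ i, f i := funext fun j => by simpa only [Finset.sum_apply] using hef j
  rw [← sum_dotProduct, ← sum_dotProduct, this]

lemma landau_div_eq (r : Fin d → ℕ) (Q : ℕ) :
    Landau e f (fun j => (r j : ℝ) / Q) =
      ((∑ i, e i ⬝ᵥ r / Q : ℕ) : ℤ) - ((∑ i, f i ⬝ᵥ r / Q : ℕ) : ℤ) := by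
  have floor_eq (c : Fin d → ℕ) : ⌊∑ j, (c j : ℝ) * (r j / Q)⌋ = ((c ⬝ᵥ r / Q : ℕ) : ℤ) := by
    rw [sum_mul_div_eq_dotProduct_div, Int.floor_div_natCast, Int.floor_natCast]
    push_cast; rfl
  simp only [Landau, floor_eq]
  push_cast; rfl

lemma sum_div_lt_sum_div_of_inDomain (hΔ : LandauCondition e f) {Q : ℕ} (hQ : 0 < Q)
    {r : Fin d → ℕ} (hr : ∀ j, r j < Q) (hD : InDomain e f Q r) :
    ∑ i, f i ⬝ᵥ r / Q < ∑ i, e i ⬝ᵥ r / Q := by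
  have hQ' : (0 : ℝ) < Q := Nat.cast_pos.mpr hQ
  have one_le_iff (c : Fin d → ℕ) : 1 ≤ ∑ j, (c j : ℝ) * (r j / Q) ↔ Q ≤ c ⬝ᵥ r := by
    rw [sum_mul_div_eq_dotProduct_div, one_le_div hQ']
    exact Nat.cast_le
  have hx (j : Fin d) : 0 ≤ (r j : ℝ) / Q ∧ (r j : ℝ) / Q < 1 :=
    ⟨by positivity, (div_lt_one hQ').mpr (Nat.cast_lt.mpr (hr j))⟩
  have := hΔ _ hx (by simpa only [InDomain, one_le_iff] using hD)
  rw [landau_div_eq] at this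
  omega

lemma sum_div_add_indicator_le (hef : ∀ j, ∑ i, e i j = ∑ i, f i j)
    (hΔ : LandauCondition e f) {Q : ℕ} (hQ : 0 < Q) (n : Fin d → ℕ) :
    ∑ i, f i ⬝ᵥ n / Q + (if InDomain e f Q (fun j => n j % Q) then 1 else 0) ≤
      ∑ i, e i ⬝ᵥ n / Q := by
  rw [sum_congr rfl fun i _ => dotProduct_div_eq (e i) n hQ,
    sum_congr rfl fun i _ => dotProduct_div_eq (f i) n hQ, sum_add_distrib, sum_add_distrib,
    sum_dotProduct_eq_of_sum_eq hef]
  split_ifs with hD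
  · have := sum_div_lt_sum_div_of_inDomain hΔ hQ (fun j => Nat.mod_lt (n j) hQ) hD
    omega
  · simp only [InDomain, not_or, not_exists, not_le] at hD
    simp [Nat.div_eq_of_lt (hD.2 _)]

lemma factorization_prod_factorial_add_card_le (hef : ∀ j, ∑ i, e i j = ∑ i, f i j)
    (hΔ : LandauCondition e f) {q : ℕ} (hq : q.Prime) (n : Fin d → ℕ) {b : ℕ}
    (he : ∀ i, e i ⬝ᵥ n < b) (hf : ∀ i, f i ⬝ᵥ n < b) :
    (∏ i, (f i ⬝ᵥ n).factorial).factorization q +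
        #{ℓ ∈ Ico 1 b | InDomain e f (q ^ ℓ) (fun j => n j % q ^ ℓ)} ≤
      (∏ i, (e i ⬝ᵥ n).factorial).factorization q := by
  rw [factorization_prod_factorial hq hf, factorization_prod_factorial hq he, card_filter,
    ← sum_add_distrib]
  exact sum_le_sum fun ℓ _ => sum_div_add_indicator_le hef hΔ (pow_pos hq.pos ℓ) n

lemma card_inDomain_digits_le {p : ℕ} {dig : ℕ → Fin d → ℕ} (hdig : ∀ k j, dig k j < p)
    {M b : ℕ} (hMb : M < b) {n : Fin d → ℕ}
    (hn : ∀ j, n j = ∑ k ∈ range M, dig k j * p ^ k) :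
    #{k ∈ range M | InDomain e f p (dig k)} ≤
      #{ℓ ∈ Ico 1 b | InDomain e f (p ^ ℓ) (fun j => n j % p ^ ℓ)} := by
  refine card_le_card_of_injOn (· + 1) (fun k hk => ?_) (fun _ _ _ _ => Nat.succ_inj.mp)
  simp only [coe_filter, mem_range, Set.mem_ofPred_eq, mem_Ico] at hk ⊢
  refine ⟨by omega, ?_⟩
  rw [pow_succ]
  refine hk.2.mono fun j => ?_
  rw [hn j, mul_comm]
  exact digit_mul_pow_le_mod_pow (fun k => hdig k j) hk.1

theorem prod_factorial_mul_pow_card_dvd (hef : ∀ j, ∑ i, e i j = ∑ i, f i j)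
    (hΔ : LandauCondition e f) {p : ℕ} (hp : p.Prime) {dig : ℕ → Fin d → ℕ}
    (hdig : ∀ k j, dig k j < p) {M : ℕ} {n : Fin d → ℕ}
    (hn : ∀ j, n j = ∑ k ∈ range M, dig k j * p ^ k) :
    (∏ i, (f i ⬝ᵥ n).factorial) * p ^ #{k ∈ range M | InDomain e f p (dig k)} ∣
      ∏ i, (e i ⬝ᵥ n).factorial := by
  rw [← Nat.factorization_le_iff_dvd (by positivity [hp.pos]) (by positivity)]
  intro q
  by_cases hq : q.Prime
  swap
  · simp [Nat.factorization_eq_zero_of_not_prime _ hq]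
  set b := M + 1 + ∑ i, e i ⬝ᵥ n + ∑ i, f i ⬝ᵥ n
  have he (i : Fin u) : e i ⬝ᵥ n < b := by
    have := single_le_sum (fun i _ => Nat.zero_le (e i ⬝ᵥ n)) (mem_univ i); omega
  have hf (i : Fin v) : f i ⬝ᵥ n < b := by
    have := single_le_sum (fun i _ => Nat.zero_le (f i ⬝ᵥ n)) (mem_univ i); omega
  refine le_trans ?_ (factorization_prod_factorial_add_card_le hef hΔ hq n he hf)
  rw [Nat.factorization_mul (by positivity) (by positivity [hp.pos]), hp.factorization_pow,
    Finsupp.add_apply, Finsupp.single_apply]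
  gcongr
  split_ifs with hpq
  · exact hpq ▸ card_inDomain_digits_le hdig (by omega) hn
  · exact Nat.zero_le _

lemma exists_qef_eq_mul_of_dvd {n : Fin d → ℕ} {m : ℕ}
    (h : (∏ i, (f i ⬝ᵥ n).factorial) * m ∣ ∏ i, (e i ⬝ᵥ n).factorial) :
    ∃ z : ℤ, Qef e f n = m * z := by
  obtain ⟨w, hw⟩ := h
  refine ⟨w, ?_⟩
  have hB : (∏ i, (f i ⬝ᵥ n).factorial : ℚ) ≠ 0 := by positivity
  simp only [dotProduct] at hw hB
  rw [Qef, div_eq_iff hB]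
  exact_mod_cast hw.trans (by ring)

end FactorialRatio

theorem factorial_ratio_digit_valuation (d u v : ℕ)
    (e : Fin u → Fin d → ℕ) (f : Fin v → Fin d → ℕ)
    (hef : ∀ j, ∑ i, e i j = ∑ i, f i j)
    (hΔ : ∀ x : Fin d → ℝ, (∀ j, 0 ≤ x j ∧ x j < 1) →
      ((∃ i, 1 ≤ ∑ j, (e i j : ℝ) * x j) ∨ (∃ i, 1 ≤ ∑ j, (f i j : ℝ) * x j)) →
      1 ≤ Landau e f x)
    (p : ℕ) (hp : p.Prime) (n : Fin d → ℕ)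
    (N : ℕ) (dig : ℕ → Fin d → ℕ) (hdig : ∀ k, ∀ j, dig k j < p)
    (hn : ∀ j, n j = ∑ k ∈ Finset.range (N + 1), dig k j * p ^ k) :
    ∃ z : ℤ, Qef e f n =
      (p : ℚ) ^ (((Finset.range (N + 1)).filter (fun k =>
          (∃ i, p ≤ ∑ j, e i j * dig k j) ∨ ∃ i, p ≤ ∑ j, f i j * dig k j)).card) * z := by
  have h := exists_qef_eq_mul_of_dvd (prod_factorial_mul_pow_card_dvd hef hΔ hp hdig hn)
  push_cast at h
  exact h
end

section
/- Let p be a prime and m, n natural numbers. Then Γ_p((m+n)p) / (Γ_p(mp) Γ_p(np)) = \prod_{λ=1, p ∤ λ}^{mp} (1 + n p / λ); in particular this ratio lies in 1 + p ℤ_p. -/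
open Finset

/-- The `p`-adic Gamma function on natural numbers:
`Γ_p(n) = (−1)^n ∏_{1 ≤ λ ≤ n−1, p ∤ λ} λ`, as an integer. -/
def padicGammaNat (p n : ℕ) : ℤ :=
  (-1) ^ n * ∏ l ∈ (Finset.Ico 1 n).filter (fun l => ¬ p ∣ l), (l : ℤ)

/-! Since `p ∣ np`, the factors of `Γ_p(np + mp)` beyond those of `Γ_p(np)` are the `np + λ`
with `λ < mp`, `p ∤ λ`, so dividing by `Γ_p(np) Γ_p(mp)` leaves `∏ (1 + np/λ)`. Each `λ` is a
`p`-adic unit, so each factor is `1 + p · (n/λ)` with `n/λ ∈ ℤ_p`, and such elements are closed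
under products. -/

section FilterNotDvd

variable {p : ℕ}

theorem filter_not_dvd_Ico_one_eq_range (N : ℕ) :
    (Ico 1 N).filter (fun l => ¬ p ∣ l) = (range N).filter (fun l => ¬ p ∣ l) := by
  ext l
  simp only [mem_filter, mem_Ico, mem_range, and_congr_left_iff]
  rintro hl
  have : l ≠ 0 := by rintro rfl; exact hl (dvd_zero p)
  omega

theorem filter_not_dvd_Icc_one_eq_range {N : ℕ} (hN : p ∣ N) :
    (Icc 1 N).filter (fun l => ¬ p ∣ l) = (range N).filter (fun l => ¬ p ∣ l) := by
  rw [← filter_not_dvd_Ico_one_eq_range]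
  ext l
  simp only [mem_filter, mem_Icc, mem_Ico, and_congr_left_iff]
  rintro hl
  have : l ≠ N := by rintro rfl; exact hl hN
  omega

theorem prod_filter_not_dvd_range_add {M : Type*} [CommMonoid M] (f : ℕ → M) {a b : ℕ}
    (hb : p ∣ b) :
    ∏ l ∈ (range (b + a)).filter (fun l => ¬ p ∣ l), f l =
      (∏ l ∈ (range b).filter (fun l => ¬ p ∣ l), f l) *
        ∏ l ∈ (range a).filter (fun l => ¬ p ∣ l), f (b + l) := by
  simp only [prod_filter, prod_range_add, Nat.dvd_add_right hb]

theorem ne_zero_of_mem_filter_not_dvd {s : Finset ℕ} {l : ℕ}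
    (hl : l ∈ s.filter (fun l => ¬ p ∣ l)) : l ≠ 0 := by
  rintro rfl
  exact (mem_filter.1 hl).2 (dvd_zero p)

end FilterNotDvd

theorem padicGammaNat_eq_prod_range (p N : ℕ) :
    padicGammaNat p N = (-1) ^ N * ∏ l ∈ (range N).filter (fun l => ¬ p ∣ l), (l : ℤ) := by
  rw [padicGammaNat, filter_not_dvd_Ico_one_eq_range]

theorem padicGammaNat_ne_zero (p N : ℕ) : padicGammaNat p N ≠ 0 := by
  rw [padicGammaNat_eq_prod_range]
  exact mul_ne_zero (pow_ne_zero _ (by norm_num))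
    (prod_ne_zero_iff.2 fun l hl => Nat.cast_ne_zero.2 (ne_zero_of_mem_filter_not_dvd hl))

theorem padicGammaNat_add_div {p a b : ℕ} (hb : p ∣ b) :
    (padicGammaNat p (b + a) : ℚ) / (padicGammaNat p a * padicGammaNat p b) =
      ∏ l ∈ (range a).filter (fun l => ¬ p ∣ l), (1 + (b : ℚ) / l) := by
  have hΓ : padicGammaNat p a * padicGammaNat p b ≠ 0 :=
    mul_ne_zero (padicGammaNat_ne_zero p a) (padicGammaNat_ne_zero p b)
  rw [div_eq_iff (mod_cast hΓ)]
  have hfactor : ∀ l ∈ (range a).filter (fun l => ¬ p ∣ l),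
      ((b + l : ℕ) : ℚ) = (1 + (b : ℚ) / l) * l := by
    intro l hl
    rw [add_mul, one_mul, div_mul_cancel₀ _ (Nat.cast_ne_zero.2 (ne_zero_of_mem_filter_not_dvd hl)),
      Nat.cast_add, add_comm]
  simp only [padicGammaNat_eq_prod_range, Int.cast_mul, Int.cast_pow, Int.cast_neg,
    Int.cast_one, Int.cast_prod, Int.cast_natCast]
  rw [prod_filter_not_dvd_range_add _ hb, prod_congr rfl hfactor, prod_mul_distrib]
  ring

theorem exists_prod_one_add_mul_eq_one_add_mul {R ι : Type*} [CommSemiring R] (a : R)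
    (s : Finset ι) (z : ι → R) : ∃ w, ∏ i ∈ s, (1 + a * z i) = 1 + a * w := by
  classical
  induction s using Finset.induction_on with
  | empty => exact ⟨0, by simp⟩
  | insert i s hi ih =>
    obtain ⟨w, hw⟩ := ih
    exact ⟨z i + w + a * z i * w, by rw [prod_insert hi, hw]; ring⟩

section Padic

variable {p : ℕ} [Fact p.Prime]

theorem exists_padicInt_coe_eq_natCast_div (n : ℕ) {l : ℕ} (hl : ¬ p ∣ l) :
    ∃ z : ℤ_[p], (z : ℚ_[p]) = n / l := by
  have hnorm : ‖(n / l : ℚ_[p])‖ ≤ 1 := by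
    rw [norm_div, Padic.norm_natCast_eq_one_iff.2 ((Nat.Prime.coprime_iff_not_dvd Fact.out).2 hl),
      div_one]
    exact_mod_cast Padic.norm_int_le_one (n : ℤ)
  exact ⟨⟨_, hnorm⟩, rfl⟩

theorem exists_prod_one_add_natCast_mul_div_eq (n : ℕ) (s : Finset ℕ)
    (hs : ∀ l ∈ s, ¬ p ∣ l) :
    ∃ w : ℤ_[p], ∏ l ∈ s, (1 + (n * p : ℚ_[p]) / l) = 1 + p * w := by
  choose! z hz using fun l (hl : l ∈ s) => exists_padicInt_coe_eq_natCast_div (p := p) n (hs l hl)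
  obtain ⟨w, hw⟩ := exists_prod_one_add_mul_eq_one_add_mul (R := ℤ_[p]) p s z
  refine ⟨w, ?_⟩
  have hcoe := congrArg PadicInt.Coe.ringHom hw
  simp only [map_prod, map_add, map_mul, map_one, map_natCast] at hcoe
  refine (prod_congr rfl fun l hl => ?_).trans hcoe
  rw [show PadicInt.Coe.ringHom (z l) = z l from rfl, hz l hl]
  ring

end Padic

theorem padic_gamma_ratio (p : ℕ) [Fact p.Prime] (m n : ℕ) :
    ((padicGammaNat p ((m + n) * p) : ℚ) /
        (padicGammaNat p (m * p) * padicGammaNat p (n * p)) =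
      ∏ l ∈ (Finset.Icc 1 (m * p)).filter (fun l => ¬ p ∣ l),
        (1 + (n * p : ℚ) / l)) ∧
    ∃ z : ℤ_[p],
      (((padicGammaNat p ((m + n) * p) : ℚ) /
          (padicGammaNat p (m * p) * padicGammaNat p (n * p)) : ℚ) : ℚ_[p]) =
        1 + p * z := by
  have hratio : (padicGammaNat p ((m + n) * p) : ℚ) /
      (padicGammaNat p (m * p) * padicGammaNat p (n * p)) =
        ∏ l ∈ (Icc 1 (m * p)).filter (fun l => ¬ p ∣ l), (1 + (n * p : ℚ) / l) := by
    rw [filter_not_dvd_Icc_one_eq_range (dvd_mul_left p m), add_comm m, add_mul,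
      padicGammaNat_add_div (dvd_mul_left p n), Nat.cast_mul]
  refine ⟨hratio, ?_⟩
  rw [hratio]
  push_cast
  exact exists_prod_one_add_natCast_mul_div_eq n _ fun l hl => (mem_filter.1 hl).2
end

section
/- Let p be a prime, and suppose an integer sequence A with A(0) coprime to p satisfies the p-Lucas property and the recurrence \sum_{k=0}^q P_k(n−k) A(n−k) = 0 for all n, with P_k ∈ ℤ_p[X], P_0 mapping p-adic units to p-adic units, and P_k(X) divisible by \prod_{i=1}^{k−1}(X+i)^2 for 2 ≤ k ≤ q (type I operator). Fix r ≥ 1 and assume: for all n and all i ≤ r, if α_p(A,n) ≥ i then p^i divides A(n). Then for every n_0 ∈ {0,...,p−1} with p | A(n_0) and every m with α_p(A,m) ≥ r, p^{r+1} divides A(n_0 + m p). -/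
open Finset Polynomial

/-- `alphaDigits p A n` is the number of base-`p` digits `d` of `n` with `p ∣ A d`. -/
def alphaDigits (p : ℕ) (A : ℤ → ℤ) (n : ℕ) : ℕ :=
  ((Nat.digits p n).filter (fun d => A d % p = 0)).length

/-!
Let `D(j) = A(0) A(j + mp) - A(j) A(mp)`. Subtracting `A(mp)` times the recurrence at `w` from
`A(0)` times the recurrence at `w + mp` expresses `P₀(w + mp) D(w)` through the `D(w - k)`,
`k ≥ 1`, up to multiples of `p A(mp)`; and `p^r ∣ A(mp)` since `α(mp) = α(m)`. For `0 < w < p`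
the value `P₀(w + mp)` is a unit, so `p^(r+1) ∣ D(w)` follows by strong induction on `w`: terms
with `k ≤ w` are handled by induction, and for `k > w` the argument `N = w + mp - k` lies just
below `mp`, so the type I factor `∏ (X + i)²` evaluated at `N` contains the squares of the
`t = m - ⌊N/p⌋` multiples of `p` in `(N, mp]`, while `α(N) ≥ r - t`; as `2t + (r - t) > r` this
gives `p^(r+1)`. Taking `w = n₀` with `p ∣ A(n₀)` and cancelling the unit `A(0)` concludes.
-/

section AlphaDigits

variable {p : ℕ} {A : ℤ → ℤ}

theorem alphaDigits_add_mul (hp : 1 < p) {d n : ℕ} (hd : d < p) (hdn : d ≠ 0 ∨ n ≠ 0) :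
    alphaDigits p A (d + p * n) = (if (p : ℤ) ∣ A d then 1 else 0) + alphaDigits p A n := by
  by_cases h : (p : ℤ) ∣ A d <;>
    simp [alphaDigits, Nat.digits_add p hp d n hd hdn, h, add_comm]

theorem alphaDigits_eq_div (hp : 1 < p) {n : ℕ} (hn : n ≠ 0) :
    alphaDigits p A n = (if (p : ℤ) ∣ A ↑(n % p) then 1 else 0) + alphaDigits p A (n / p) := by
  conv_lhs => rw [← Nat.mod_add_div n p]
  refine alphaDigits_add_mul hp (Nat.mod_lt n (by omega)) ?_
  by_contra! h
  have := Nat.mod_add_div n p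
  rw [h.1, h.2, mul_zero] at this
  omega

theorem alphaDigits_div_le (hp : 1 < p) (n : ℕ) : alphaDigits p A (n / p) ≤ alphaDigits p A n := by
  rcases eq_or_ne n 0 with rfl | hn
  · simp
  · rw [alphaDigits_eq_div hp hn (A := A)]
    omega

theorem alphaDigits_le_div_add_one (hp : 1 < p) (n : ℕ) :
    alphaDigits p A n ≤ alphaDigits p A (n / p) + 1 := by
  rcases eq_or_ne n 0 with rfl | hn
  · simp
  · rw [alphaDigits_eq_div hp hn (A := A)]
    split_ifs <;> omega

theorem alphaDigits_mul_base (hp : 1 < p) (hA0 : ¬ (p : ℤ) ∣ A 0) (n : ℕ) :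
    alphaDigits p A (p * n) = alphaDigits p A n := by
  rcases eq_or_ne n 0 with rfl | hn
  · simp
  · simpa [hA0] using alphaDigits_add_mul (A := A) hp (by omega : 0 < p) (Or.inr hn)

theorem alphaDigits_succ_le (hp : 1 < p) (hA0 : ¬ (p : ℤ) ∣ A 0) (n : ℕ) :
    alphaDigits p A (n + 1) ≤ alphaDigits p A n + 1 := by
  induction n using Nat.strong_induction_on with
  | _ n ih =>
  by_cases hdvd : p ∣ n + 1
  · have hn : n ≠ 0 := by rintro rfl; exact hp.ne' (Nat.dvd_one.mp hdvd)
    calc alphaDigits p A (n + 1) = alphaDigits p A (n / p + 1) := by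
          rw [← Nat.succ_div_of_dvd hdvd, ← alphaDigits_mul_base hp hA0 ((n + 1) / p),
            Nat.mul_div_cancel' hdvd]
      _ ≤ alphaDigits p A (n / p) + 1 := ih _ (Nat.div_lt_self (by omega) hp)
      _ ≤ alphaDigits p A n + 1 := by grw [alphaDigits_div_le hp]
  · calc alphaDigits p A (n + 1) ≤ alphaDigits p A ((n + 1) / p) + 1 :=
          alphaDigits_le_div_add_one hp _
      _ ≤ alphaDigits p A n + 1 := by
          rw [Nat.succ_div_of_not_dvd hdvd]; grw [alphaDigits_div_le hp]

theorem alphaDigits_le_add_sub (hp : 1 < p) (hA0 : ¬ (p : ℤ) ∣ A 0) {s n : ℕ} (h : s ≤ n) :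
    alphaDigits p A n ≤ alphaDigits p A s + (n - s) := by
  induction n, h using Nat.le_induction with
  | base => simp
  | succ n hsn ih => have := alphaDigits_succ_le hp hA0 n; omega

end AlphaDigits

theorem pow_dvd_prod_Icc_add {p N k t : ℕ} (hp : 0 < p) (ht : (N / p + t) * p < N + k) :
    p ^ t ∣ ∏ i ∈ Icc 1 (k - 1), (N + i) := by
  set S := Icc (N / p + 1) (N / p + t)
  have hlt : ∀ σ ∈ S, N < σ * p := fun σ hσ => by
    have := Nat.lt_div_mul_add (a := N) hp
    nlinarith [(mem_Icc.mp hσ).1]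
  have hinj : Set.InjOn (fun σ => σ * p - N) S := fun a ha b hb hab => by
    have := hlt a ha; have := hlt b hb
    exact Nat.eq_of_mul_eq_mul_right hp (by simp only at hab; omega)
  have hsub : S.image (fun σ => σ * p - N) ⊆ Icc 1 (k - 1) := by
    intro i hi
    obtain ⟨σ, hσ, rfl⟩ := mem_image.mp hi
    have := hlt σ hσ
    have : σ * p ≤ (N / p + t) * p := Nat.mul_le_mul_right p (mem_Icc.mp hσ).2
    exact mem_Icc.mpr ⟨by omega, by omega⟩
  calc p ^ t = ∏ _σ ∈ S, p := by simp [S]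
    _ ∣ ∏ σ ∈ S, (N + (σ * p - N)) :=
        prod_dvd_prod_of_dvd _ _ fun σ hσ =>
          ⟨σ, by rw [Nat.add_sub_cancel' (hlt σ hσ).le, mul_comm]⟩
    _ = ∏ i ∈ S.image (fun σ => σ * p - N), (N + i) := (prod_image hinj).symm
    _ ∣ ∏ i ∈ Icc 1 (k - 1), (N + i) := prod_dvd_prod_of_subset _ _ _ hsub

theorem pow_dvd_eval_of_prod_dvd {R : Type*} [CommSemiring R] {Q : R[X]} {p N k t : ℕ}
    (hp : 0 < p) (hQ : ∏ i ∈ Icc 1 (k - 1), (X + C (i : R)) ^ 2 ∣ Q)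
    (ht : (N / p + t) * p < N + k) :
    (p : R) ^ (2 * t) ∣ Q.eval (N : R) := by
  have hprod := Nat.cast_dvd_cast (α := R) (pow_dvd_prod_Icc_add hp ht)
  have hQN := eval_dvd (x := (N : R)) hQ
  simp only [eval_prod, eval_pow, eval_add, eval_X, eval_C, prod_pow] at hQN
  push_cast at hprod
  rw [mul_comm, pow_mul]
  exact (pow_dvd_pow_of_dvd hprod 2).trans hQN

theorem PadicInt.isUnit_intCast_iff {p : ℕ} [Fact p.Prime] (k : ℤ) :
    IsUnit (k : ℤ_[p]) ↔ ¬ (p : ℤ) ∣ k := by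
  rw [← not_iff_not, not_not, PadicInt.not_isUnit_iff, PadicInt.norm_int_lt_one_iff_dvd]

def lucasDefect (A : ℤ → ℤ) (c j : ℤ) : ℤ := A 0 * A (j + c) - A j * A c

theorem sum_eval_mul_lucasDefect {R : Type*} [CommRing R] {A : ℤ → ℤ} {q : ℕ} {P : ℕ → R[X]}
    (hrec : ∀ n : ℤ, ∑ k ∈ range (q + 1), (P k).eval ((n - k : ℤ) : R) * (A (n - k) : R) = 0)
    (c w : ℤ) :
    ∑ k ∈ range (q + 1), ((P k).eval ((w + c - k : ℤ) : R) * (lucasDefect A c (w - k) : R)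
      + ((P k).eval ((w + c - k : ℤ) : R) - (P k).eval ((w - k : ℤ) : R))
        * (A (w - k) : R) * (A c : R)) = 0 := by
  calc _ = (A 0 : R) * ∑ k ∈ range (q + 1), (P k).eval ((w + c - k : ℤ) : R) * (A (w + c - k) : R)
        - (∑ k ∈ range (q + 1), (P k).eval ((w - k : ℤ) : R) * (A (w - k) : R)) * (A c : R) := by
        rw [mul_sum, sum_mul, ← sum_sub_distrib]
        refine sum_congr rfl fun k _ => ?_
        rw [lucasDefect, show w - k + c = w + c - k by ring]
        push_cast
        ring
    _ = 0 := by rw [hrec, hrec, mul_zero, zero_mul, sub_zero]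

section PadicCongruence

variable {p : ℕ} [Fact p.Prime] {A : ℤ → ℤ} {r m : ℕ}

theorem pow_dvd_mul_base (hA0 : ¬ (p : ℤ) ∣ A 0)
    (hU : ∀ n : ℕ, ∀ i ≤ r, i ≤ alphaDigits p A n → (p : ℤ) ^ i ∣ A n)
    (hm : r ≤ alphaDigits p A m) :
    (p : ℤ_[p]) ^ r ∣ (A (m * p) : ℤ_[p]) := by
  have hp : 1 < p := (Fact.out : p.Prime).one_lt
  rw [PadicInt.pow_p_dvd_int_iff]
  exact_mod_cast hU (m * p) r le_rfl (by rwa [mul_comm, alphaDigits_mul_base hp hA0])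

theorem pow_succ_dvd_eval_mul_of_lt (hAneg : ∀ j : ℤ, j < 0 → A j = 0)
    (hA0 : ¬ (p : ℤ) ∣ A 0)
    (hU : ∀ n : ℕ, ∀ i ≤ r, i ≤ alphaDigits p A n → (p : ℤ) ^ i ∣ A n)
    (hm : r ≤ alphaDigits p A m) {Q : ℤ_[p][X]} {k : ℕ}
    (hQ : ∏ i ∈ Icc 1 (k - 1), (X + C (i : ℤ_[p])) ^ 2 ∣ Q)
    {j : ℤ} (hj : j < m * p) (hjk : m * p < j + k) :
    (p : ℤ_[p]) ^ (r + 1) ∣ Q.eval (j : ℤ_[p]) * (A j : ℤ_[p]) := by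
  rcases lt_or_ge j 0 with hneg | hnonneg
  · simp [hAneg j hneg]
  lift j to ℕ using hnonneg
  have hp : p.Prime := Fact.out
  have hjm : j / p < m := (Nat.div_lt_iff_lt_mul hp.pos).mpr (by exact_mod_cast hj)
  set t := m - j / p
  have hQj : (p : ℤ_[p]) ^ (2 * t) ∣ Q.eval (j : ℤ_[p]) :=
    pow_dvd_eval_of_prod_dvd hp.pos hQ (by rw [show j / p + t = m by omega]; exact_mod_cast hjk)
  have hα : r - t ≤ alphaDigits p A j := by
    have := alphaDigits_le_add_sub hp.one_lt hA0 hjm.le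
    have := alphaDigits_div_le (A := A) hp.one_lt j
    omega
  have hAj : (p : ℤ_[p]) ^ (r - t) ∣ (A j : ℤ_[p]) :=
    (PadicInt.pow_p_dvd_int_iff _ _).mpr (hU j _ (Nat.sub_le r t) hα)
  rw [Int.cast_natCast]
  exact (pow_dvd_pow _ (by omega : r + 1 ≤ 2 * t + (r - t))).trans
    (pow_add (p : ℤ_[p]) _ _ ▸ mul_dvd_mul hQj hAj)

theorem pow_succ_dvd_lucasDefect (hAneg : ∀ j : ℤ, j < 0 → A j = 0)
    (hA0 : ¬ (p : ℤ) ∣ A 0) {q : ℕ} {P : ℕ → ℤ_[p][X]}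
    (hrec : ∀ n : ℤ,
      ∑ k ∈ range (q + 1), (P k).eval ((n - k : ℤ) : ℤ_[p]) * (A (n - k) : ℤ_[p]) = 0)
    (hP0 : ∀ z : ℤ_[p], IsUnit z → IsUnit ((P 0).eval z))
    (hPk : ∀ k, 2 ≤ k → k ≤ q → (∏ i ∈ Icc 1 (k - 1), (X + C (i : ℤ_[p])) ^ 2) ∣ P k)
    (hU : ∀ n : ℕ, ∀ i ≤ r, i ≤ alphaDigits p A n → (p : ℤ) ^ i ∣ A n)
    (hm : r ≤ alphaDigits p A m) {w : ℕ} (hw : w < p) :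
    (p : ℤ_[p]) ^ (r + 1) ∣ (lucasDefect A (m * p) w : ℤ_[p]) := by
  induction w using Nat.strong_induction_on with
  | _ w ih =>
  rcases Nat.eq_zero_or_pos w with rfl | hw0
  · simp [lucasDefect]
  have hshift : ∀ k : ℕ, (p : ℤ_[p]) ^ (r + 1) ∣
      ((P k).eval ((w + m * p - k : ℤ) : ℤ_[p]) - (P k).eval ((w - k : ℤ) : ℤ_[p]))
        * (A (w - k) : ℤ_[p]) * (A (m * p) : ℤ_[p]) := by
    intro k
    have hP : (p : ℤ_[p]) ∣
        (P k).eval ((w + m * p - k : ℤ) : ℤ_[p]) - (P k).eval ((w - k : ℤ) : ℤ_[p]) := by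
      refine dvd_trans ⟨m, ?_⟩ (sub_dvd_eval_sub _ _ (P k))
      push_cast; ring
    rw [pow_succ', mul_assoc]
    exact mul_dvd_mul hP (dvd_mul_of_dvd_right (pow_dvd_mul_base hA0 hU hm) _)
  have hhigher : ∀ k ∈ range q, (p : ℤ_[p]) ^ (r + 1) ∣
      (P (k + 1)).eval ((w + m * p - (k + 1 : ℕ) : ℤ) : ℤ_[p])
        * (lucasDefect A (m * p) (w - (k + 1 : ℕ)) : ℤ_[p]) := by
    intro k hk
    rcases le_or_gt (k + 1) w with hkw | hwk
    · have := ih (w - (k + 1)) (by omega) (by omega)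
      rw [Nat.cast_sub hkw] at this
      exact dvd_mul_of_dvd_right this _
    · have hQ := hPk (k + 1) (by omega) (by simp at hk; omega)
      have htail := pow_succ_dvd_eval_mul_of_lt hAneg hA0 hU hm hQ
        (j := w + m * p - (k + 1 : ℕ)) (by push_cast; omega) (by push_cast; omega)
      rw [lucasDefect, hAneg (w - (k + 1 : ℕ)) (by omega), zero_mul, sub_zero, show
        (w : ℤ) - (k + 1 : ℕ) + m * p = w + m * p - (k + 1 : ℕ) by ring]
      push_cast at htail ⊢
      rw [mul_left_comm]
      exact dvd_mul_of_dvd_right htail _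
  have hlead : (p : ℤ_[p]) ^ (r + 1) ∣
      (P 0).eval ((w + m * p : ℤ) : ℤ_[p]) * (lucasDefect A (m * p) w : ℤ_[p]) := by
    have h := sum_eval_mul_lucasDefect hrec (m * p) w ▸ dvd_zero ((p : ℤ_[p]) ^ (r + 1))
    rw [sum_add_distrib, sum_range_succ', dvd_add_left (dvd_sum fun k _ => hshift k),
      dvd_add_right (dvd_sum hhigher)] at h
    simpa using h
  have hunit : IsUnit ((w + m * p : ℤ) : ℤ_[p]) := by
    rw [PadicInt.isUnit_intCast_iff, dvd_add_left (dvd_mul_left _ _), Int.natCast_dvd_natCast]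
    exact Nat.not_dvd_of_pos_of_lt hw0 hw
  exact (hP0 _ hunit).dvd_mul_left.mp hlead

end PadicCongruence

theorem induction_step_type_I_general (p : ℕ) [hp : Fact p.Prime]
    (A : ℤ → ℤ) (hAneg : ∀ m : ℤ, m < 0 → A m = 0)
    (hA0 : ¬ (p : ℤ) ∣ A 0)
    (q : ℕ) (P : ℕ → Polynomial ℤ_[p])
    (hrec : ∀ n : ℤ,
      ∑ k ∈ Finset.range (q + 1), (P k).eval ((n - k : ℤ) : ℤ_[p]) * (A (n - k) : ℤ_[p]) = 0)
    (hP0 : ∀ z : ℤ_[p], IsUnit z → IsUnit ((P 0).eval z))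
    (hPk : ∀ k, 2 ≤ k → k ≤ q →
      (∏ i ∈ Finset.Icc 1 (k - 1), (X + C (i : ℤ_[p])) ^ 2) ∣ P k)
    (r : ℕ)
    (hU : ∀ n : ℕ, ∀ i ≤ r, i ≤ alphaDigits p A n → (p : ℤ) ^ i ∣ A n)
    (n0 : ℕ) (hn0 : n0 < p) (hn0z : (p : ℤ) ∣ A n0)
    (m : ℕ) (hm : r ≤ alphaDigits p A m) :
    (p : ℤ) ^ (r + 1) ∣ A (n0 + m * p) := by
  have hdefect := pow_succ_dvd_lucasDefect hAneg hA0 hrec hP0 hPk hU hm hn0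
  have hn0z' : (p : ℤ_[p]) ∣ (A n0 : ℤ_[p]) := by
    exact_mod_cast map_dvd (Int.castRingHom ℤ_[p]) hn0z
  have hprod : (p : ℤ_[p]) ^ (r + 1) ∣ (A n0 : ℤ_[p]) * (A (m * p) : ℤ_[p]) :=
    pow_succ' (p : ℤ_[p]) r ▸ mul_dvd_mul hn0z' (pow_dvd_mul_base hA0 hU hm)
  have h := dvd_add hdefect hprod
  rw [lucasDefect, Int.cast_sub, Int.cast_mul, Int.cast_mul (A n0), sub_add_cancel,
    ((PadicInt.isUnit_intCast_iff _).mpr hA0).dvd_mul_left, PadicInt.pow_p_dvd_int_iff] at h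
  exact_mod_cast h

theorem induction_step_type_I (p : ℕ) [hp : Fact p.Prime]
    (A : ℤ → ℤ) (hAneg : ∀ m : ℤ, m < 0 → A m = 0)
    (hA0 : ¬ (p : ℤ) ∣ A 0)
    (hLucas : ∀ v : ℕ, v < p → ∀ n : ℕ, A (v + n * p) ≡ A v * A n [ZMOD p])
    (q : ℕ) (P : ℕ → Polynomial ℤ_[p])
    (hrec : ∀ n : ℤ,
      ∑ k ∈ Finset.range (q + 1), (P k).eval ((n - k : ℤ) : ℤ_[p]) * (A (n - k) : ℤ_[p]) = 0)
    (hP0 : ∀ z : ℤ_[p], IsUnit z → IsUnit ((P 0).eval z))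
    (hPk : ∀ k, 2 ≤ k → k ≤ q →
      (∏ i ∈ Finset.Icc 1 (k - 1), (X + C (i : ℤ_[p])) ^ 2) ∣ P k)
    (r : ℕ) (hr : 1 ≤ r)
    (hU : ∀ n : ℕ, ∀ i ≤ r, i ≤ alphaDigits p A n → (p : ℤ) ^ i ∣ A n)
    (n0 : ℕ) (hn0 : n0 < p) (hn0z : (p : ℤ) ∣ A n0)
    (m : ℕ) (hm : r ≤ alphaDigits p A m) :
    (p : ℤ) ^ (r + 1) ∣ A (n0 + m * p) :=
  induction_step_type_I_general p (hp := hp) A hAneg hA0 q P hrec hP0 hPk r hU n0 hn0 hn0z m hm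
end
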